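/- arXiv:1311.2491 — 10 statements merged into one kernel-verified Lean document; each statement's English description precedes it below -/
import Mathlib

section
/- Let f : [1,∞) → ℝ be non-negative and non-decreasing, and let F(x) = Σ_{n ≤ x} f(x/n). If there exist real constants A, B such that F(x) = A·x·log x + B·x + o(x) as x → ∞, then f(x) = O(x) as x → ∞. -/
/-!
Write `F` for the Möbius transform. Since `⌊x/2⌋ = ⌊x⌋ / 2`, the even-indexed terms of `F x` add up
to `F (x/2)`, so `F x - 2 F (x/2) = ∑_{n ≤ x} (-1)^(n+1) f (x/n)`. The terms `f (x/n)` decrease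
in `n`, so this alternating sum is at least its first pair `f x - f (x/2)`. On the other hand the
asymptotic formula gives `F x - 2 F (x/2) = A log 2 · x + o(x) = O(x)`. Hence
`f x ≤ f (x/2) + C x` for large `x`, and iterating along `x, x/2, x/4, …` down to a fixed range
yields `f x ≤ 2 C x + O(1)`.

Replacing `f` by `y ↦ f (max y 1)` makes it monotone and nonnegative on all of `ℝ` without
changing `F` or the behaviour at infinity.
-/

open Filter Real Finset Asymptotics

noncomputable def moebiusTransform (f : ℝ → ℝ) (x : ℝ) : ℝ := ∑ n ∈ Icc 1 ⌊x⌋₊, f (x / n)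

theorem moebiusTransform_eq_sum_range (f : ℝ → ℝ) (x : ℝ) :
    moebiusTransform f x = ∑ k ∈ range ⌊x⌋₊, f (x / (k + 1)) := by
  rw [range_eq_Ico]
  exact_mod_cast (sum_Ico_add' (fun n : ℕ => f (x / n)) 0 ⌊x⌋₊ 1).symm

theorem moebiusTransform_comp_max_one (f : ℝ → ℝ) :
    moebiusTransform (fun y => f (max y 1)) = moebiusTransform f := by
  funext x
  refine sum_congr rfl fun n hn => ?_
  obtain ⟨hn1, hnx⟩ := mem_Icc.1 hn
  have hn0 : (0 : ℝ) < n := by exact_mod_cast hn1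
  simp only [max_eq_left ((one_le_div hn0).2 ((Nat.le_floor_iff' (by omega)).1 hnx))]

section Alternating

variable {a : ℕ → ℝ}

theorem alternating_sum_nonneg_and_le (ha : Antitone a) (ha0 : ∀ n, 0 ≤ a n) (N : ℕ) :
    0 ≤ ∑ k ∈ range N, (-1) ^ k * a k ∧ ∑ k ∈ range N, (-1) ^ k * a k ≤ a 0 := by
  induction N generalizing a with
  | zero => simpa using ha0 0
  | succ N ih =>
    obtain ⟨h0, h1⟩ := ih (a := fun n => a (n + 1)) (fun _ _ h => ha (by omega)) fun n => ha0 _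
    rw [sum_range_succ']
    simp only [pow_succ, mul_neg_one, neg_mul, sum_neg_distrib, pow_zero, one_mul, zero_add]
      at h1 ⊢
    have := ha (zero_le_one (α := ℕ))
    constructor <;> linarith

theorem sub_le_alternating_sum (ha : Antitone a) (ha0 : ∀ n, 0 ≤ a n) (N : ℕ) :
    a 0 - a 1 ≤ ∑ k ∈ range (N + 1), (-1) ^ k * a k := by
  have := (alternating_sum_nonneg_and_le (a := fun n => a (n + 1)) (fun _ _ h => ha (by omega))
    (fun n => ha0 _) N).2
  rw [sum_range_succ']
  simp only [pow_succ, mul_neg_one, neg_mul, sum_neg_distrib, pow_zero, one_mul, zero_add]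
    at this ⊢
  linarith

end Alternating

theorem sum_range_sub_two_mul_sum_odd {R : Type*} [CommRing R] (h : ℕ → R) (N : ℕ) :
    ∑ k ∈ range N, h k - 2 * ∑ k ∈ range (N / 2), h (2 * k + 1)
      = ∑ k ∈ range N, (-1) ^ k * h k := by
  induction N with
  | zero => simp
  | succ N ih =>
    rcases Nat.even_or_odd' N with ⟨m, rfl | rfl⟩
    · rw [show 2 * m / 2 = m by omega] at ih
      rw [show (2 * m + 1) / 2 = m by omega, sum_range_succ h, sum_range_succ (fun k => _ * h k),
        ← ih, pow_mul]
      simp only [neg_one_sq, one_pow, one_mul]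
      ring
    · rw [show (2 * m + 1) / 2 = m by omega] at ih
      rw [show (2 * m + 1 + 1) / 2 = m + 1 by omega, sum_range_succ h,
        sum_range_succ (fun k => h (2 * k + 1)), sum_range_succ (fun k => _ * h k), ← ih, pow_succ,
        pow_mul]
      simp only [neg_one_sq, one_pow, one_mul]
      ring

theorem isBigO_id_sub_two_mul_half_of_isLittleO {F : ℝ → ℝ} (A B : ℝ)
    (hF : (fun x => F x - (A * x * log x + B * x)) =o[atTop] fun x => x) :
    (fun x => F x - 2 * F (x / 2)) =O[atTop] fun x => x := by
  have hhalf : (fun x : ℝ => x / 2) =O[atTop] fun x => x :=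
    isBigO_of_le _ fun x => by simp
  have hF2 := (hF.comp_tendsto (tendsto_id.atTop_div_const two_pos)).trans_isBigO hhalf
  refine ((hF.isBigO.sub (hF2.isBigO.const_mul_left 2)).add
    ((isBigO_refl _ _).const_mul_left (A * log 2))).congr' ?_ EventuallyEq.rfl
  filter_upwards [eventually_gt_atTop 0] with x hx
  simp only [Function.comp_apply, id, log_div hx.ne' two_ne_zero]
  ring

section Monotone

variable {g : ℝ → ℝ}

theorem sub_half_le_moebiusTransform_sub (hg : Monotone g) (hg0 : ∀ y, 0 ≤ g y) {x : ℝ}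
    (hx : 1 ≤ x) :
    g x - g (x / 2) ≤ moebiusTransform g x - 2 * moebiusTransform g (x / 2) := by
  set a : ℕ → ℝ := fun k => g (x / (k + 1))
  have ha : Antitone a := fun k l hkl =>
    hg (div_le_div_of_nonneg_left (by linarith) (by positivity) (by gcongr))
  have hhalf : moebiusTransform g (x / 2) = ∑ k ∈ range (⌊x⌋₊ / 2), a (2 * k + 1) := by
    rw [moebiusTransform_eq_sum_range, Nat.floor_div_ofNat]
    refine sum_congr rfl fun k _ => congrArg g ?_
    push_cast
    rw [div_div]
    ring_nf
  obtain ⟨n, hn⟩ : ∃ n, ⌊x⌋₊ = n + 1 :=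
    Nat.exists_eq_add_of_le' (Nat.one_le_floor_iff x |>.2 hx)
  rw [moebiusTransform_eq_sum_range, hhalf, sum_range_sub_two_mul_sum_odd, hn]
  convert sub_le_alternating_sum ha (fun k => hg0 _) n using 2 <;> norm_num [a]

theorem le_two_mul_add_of_sub_half_le (hg : Monotone g) {C x₀ : ℝ} (hC : 0 ≤ C)
    (hstep : ∀ x ≥ x₀, g x - g (x / 2) ≤ C * x) (n : ℕ) :
    ∀ x, 0 ≤ x → x ≤ 2 ^ n * x₀ → g x ≤ 2 * C * x + g (2 * x₀) := by
  induction n with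
  | zero =>
    intro x hx hxn
    have := hg (show x ≤ 2 * x₀ by linarith [pow_zero (2 : ℝ)])
    nlinarith
  | succ n ih =>
    intro x hx hxn
    rcases le_or_gt x (2 * x₀) with hx₀ | hx₀
    · have := hg hx₀
      nlinarith
    · have := ih (x / 2) (by positivity) (by rw [pow_succ] at hxn; linarith)
      have := hstep x (by linarith)
      linarith

theorem isBigO_id_of_sub_half_le (hg : Monotone g) (hg0 : ∀ y, 0 ≤ g y) {C : ℝ}
    (hstep : ∀ᶠ x in atTop, g x - g (x / 2) ≤ C * x) : g =O[atTop] fun x => x := by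
  obtain ⟨x₀, hx₀⟩ := eventually_atTop.1 (hstep.and (eventually_ge_atTop 1))
  have hx₀1 : 1 ≤ x₀ := (hx₀ x₀ le_rfl).2
  set C' := max C 0
  have hbound : ∀ x, 0 ≤ x → g x ≤ 2 * C' * x + g (2 * x₀) := fun x hx => by
    obtain ⟨n, hn⟩ := pow_unbounded_of_one_lt (x / x₀) one_lt_two
    refine le_two_mul_add_of_sub_half_le hg (le_max_right C 0)
      (fun y hy => (hx₀ y hy).1.trans ?_) n x hx ?_
    · gcongr
      · linarith
      · exact le_max_left C 0
    · rw [div_lt_iff₀ (by linarith)] at hn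
      exact hn.le
  refine isBigO_iff.2 ⟨2 * C' + g (2 * x₀), ?_⟩
  filter_upwards [eventually_ge_atTop 1] with x hx
  rw [norm_of_nonneg (hg0 x), norm_of_nonneg (by linarith)]
  nlinarith [hbound x (by linarith), hg0 (2 * x₀)]

theorem isBigO_id_of_moebiusTransform (hg : Monotone g) (hg0 : ∀ y, 0 ≤ g y)
    (A B : ℝ)
    (hF : (fun x => moebiusTransform g x - (A * x * log x + B * x)) =o[atTop] fun x => x) :
    g =O[atTop] fun x => x := by
  obtain ⟨C, hC⟩ := (isBigO_id_sub_two_mul_half_of_isLittleO A B hF).bound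
  refine isBigO_id_of_sub_half_le hg hg0 (C := C) ?_
  filter_upwards [hC, eventually_ge_atTop 1] with x hCx hx
  calc g x - g (x / 2)
      ≤ moebiusTransform g x - 2 * moebiusTransform g (x / 2) :=
        sub_half_le_moebiusTransform_sub hg hg0 hx
    _ ≤ ‖moebiusTransform g x - 2 * moebiusTransform g (x / 2)‖ := le_norm_self _
    _ ≤ C * ‖x‖ := hCx
    _ = C * x := by rw [norm_of_nonneg (by linarith)]

end Monotone

theorem moebius_transform_estimate_f_bigO
    (f : ℝ → ℝ) (A B : ℝ)
    (hnonneg : ∀ x, 1 ≤ x → 0 ≤ f x)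
    (hmono : ∀ x y, 1 ≤ x → x ≤ y → f x ≤ f y)
    (hF : (fun x : ℝ =>
        (∑ n ∈ Finset.Icc 1 ⌊x⌋₊, f (x / n)) - (A * x * Real.log x + B * x))
      =o[atTop] fun x : ℝ => x) :
    f =O[atTop] fun x : ℝ => x := by
  set g : ℝ → ℝ := fun y => f (max y 1)
  have hg : Monotone g := fun y z hyz => hmono _ _ (le_max_right y 1) (max_le_max_right 1 hyz)
  have hfg : g =ᶠ[atTop] f := by
    filter_upwards [eventually_ge_atTop 1] with y hy
    simp only [g, max_eq_left hy]
  refine (isBigO_id_of_moebiusTransform hg (fun y => hnonneg _ (le_max_right y 1)) A B ?_).congr'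
    hfg EventuallyEq.rfl
  rw [moebiusTransform_comp_max_one]
  exact hF
end

section
/- Let g : [1,∞) → ℝ and suppose there exist constants M, M' ≥ 0 such that (1) the function x ↦ g(x) + M·x is non-decreasing on [1,∞), and (2) |∫_1^x g(t)/t² dt| ≤ M' for all x ≥ 1. Then S := limsup_{x→∞} |g(x)|/x is finite, and moreover if S > 0 then limsup_{x→∞} (1/log x)·∫_1^x |g(t)|/t² dt < S. -/
/-!
Put `φ s = g (exp s) / exp s`. Then `(φ s + M) * exp s` is nondecreasing, integrals of `φ` over
intervals in `[0, ∞)` are bounded by `2 M'`, and `(1 / log x) ∫₁ˣ |g t| / t²` is the mean of `|φ|`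
over `[0, log x]`. As `φ + M` decays at most like `exp (-s)`, a large value of `|φ|` persists over
a unit interval and would make an integral of `φ` large; hence `φ` is bounded.

Let `S = limsup |φ| > 0`. Once `|φ| ≤ S + ε`, the function `φ s + m s` is nondecreasing for
`m = M + 2 S`: `φ` falls at rate at most `m`. In a window of length `L`, either `φ` falls from
`S/2` to `-S/2`, which takes time `S / m` spent in `|φ| < S/2`, or the window splits into a part
where `φ ≤ S/2` and a part where `φ ≥ -S/2`; there the bounded integral of `φ` and the convexity
of `|·|` keep the mean of `|φ|` near `3 S / 4`. So the mean of `|φ|` over every late window is at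
most `S - ε` for small `ε`.
-/

open Filter Real Set MeasureTheory intervalIntegral

theorem exists_mem_Icc_forall_Ico_not_and_forall_Ioc_not {α : Type*}
    [ConditionallyCompleteLinearOrder α] {P Q : α → Prop} {a b : α} (hab : a ≤ b)
    (h : ∀ u ∈ Icc a b, ∀ v ∈ Icc a b, u ≤ v → P u → ¬Q v) :
    ∃ c ∈ Icc a b, (∀ s ∈ Ico a c, ¬P s) ∧ ∀ s ∈ Ioc c b, ¬Q s := by
  set A := {s ∈ Icc a b | P s} ∪ {b}
  have hbA : b ∈ A := Or.inr rfl
  have haA : ∀ s ∈ A, a ≤ s := by rintro s (hs | rfl); exacts [hs.1.1, hab]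
  have hA : BddBelow A := ⟨a, haA⟩
  refine ⟨sInf A, ⟨le_csInf ⟨b, hbA⟩ haA, csInf_le hA hbA⟩, fun s hs hP => ?_, fun s hs hQ => ?_⟩
  · exact (csInf_le hA (Or.inl ⟨⟨hs.1, (hs.2.trans_le (csInf_le hA hbA)).le⟩, hP⟩)).not_gt hs.2
  · obtain ⟨u, hu | rfl, hus⟩ := exists_lt_of_csInf_lt ⟨b, hbA⟩ hs.1
    · exact h u hu.1 s ⟨hu.1.1.trans hus.le, hs.2⟩ hus.le hu.2 hQ
    · exact hus.not_ge hs.2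

section Window

variable {ψ : ℝ → ℝ} {a b : ℝ}

theorem exists_mapsTo_Ioo_of_monotoneOn_add_mul {m u v α β : ℝ} (hm : 0 < m)
    (hmono : MonotoneOn (fun s => ψ s + m * s) (Icc u v)) (huv : u ≤ v)
    (hu : β ≤ ψ u) (hv : ψ v ≤ α) :
    ∃ c ∈ Icc u v, c + (β - α) / m ≤ v ∧ MapsTo ψ (Ioo c (c + (β - α) / m)) (Ioo α β) := by
  set A := {s ∈ Icc u v | β ≤ ψ s}
  have huA : u ∈ A := ⟨left_mem_Icc.2 huv, hu⟩
  have hA : BddAbove A := bddAbove_Icc.mono fun s hs => hs.1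
  set c := sSup A
  have hc : c ∈ Icc u v := ⟨le_csSup hA huA, csSup_le ⟨u, huA⟩ fun s hs => hs.1.2⟩
  -- `ψ` can only jump upwards, so the supremum of `{β ≤ ψ}` still lies in it
  have hψc : β ≤ ψ c := by
    refine le_of_forall_pos_lt_add fun η hη => ?_
    obtain ⟨s, hs, hsc⟩ := exists_lt_of_lt_csSup ⟨u, huA⟩ (sub_lt_self c (div_pos hη hm))
    have := hmono hs.1 hc (le_csSup hA hs)
    have : m * (c - s) < η := by rw [← lt_div_iff₀' hm]; linarith
    linarith [hs.2]
  have hfall : ∀ s ∈ Icc c v, ψ c - m * (s - c) ≤ ψ s := fun s hs => by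
    have := hmono hc ⟨hc.1.trans hs.1, hs.2⟩ hs.1
    linarith
  have hτ : c + (β - α) / m ≤ v := by
    rw [← le_sub_iff_add_le', div_le_iff₀' hm]
    linarith [hfall v ⟨hc.2, le_rfl⟩]
  refine ⟨c, hc, hτ, fun s hs => ⟨?_, ?_⟩⟩
  · have : m * (s - c) < β - α := by rw [← lt_div_iff₀' hm]; linarith [hs.2]
    linarith [hfall s ⟨hs.1.le, hs.2.le.trans hτ⟩]
  · by_contra! h
    exact (le_csSup hA ⟨⟨hc.1.trans hs.1.le, hs.2.le.trans hτ⟩, h⟩).not_gt hs.1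

theorem integral_abs_le_of_abs_le_of_le_half {S : ℝ} (hab : a ≤ b)
    (hint : IntervalIntegrable ψ volume a b)
    (hψ : ∀ s ∈ Ioo a b, |ψ s| ≤ 3 * S / 2 ∧ ψ s ≤ S / 2) :
    ∫ s in a..b, |ψ s| ≤ 3 * S / 4 * (b - a) - (∫ s in a..b, ψ s) / 2 := by
  -- on `[-3S/2, S/2]`, `|y|` lies below the chord `3S/4 - y/2`
  have hchord : ∀ s ∈ Ioo a b, |ψ s| ≤ 3 * S / 4 - ψ s / 2 := fun s hs => by
    obtain ⟨h₁, h₂⟩ := hψ s hs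
    exact abs_le.2 ⟨by linarith [neg_abs_le (ψ s)], by linarith⟩
  calc ∫ s in a..b, |ψ s| ≤ ∫ s in a..b, (3 * S / 4 - ψ s / 2) :=
        integral_mono_on_of_le_Ioo hab hint.abs (intervalIntegrable_const.sub (hint.div_const 2))
          hchord
    _ = 3 * S / 4 * (b - a) - (∫ s in a..b, ψ s) / 2 := by
        rw [integral_sub intervalIntegrable_const (hint.div_const 2),
          intervalIntegral.integral_const, intervalIntegral.integral_div, smul_eq_mul, mul_comm]

theorem integral_abs_le_of_mapsTo_Ioo {c τ B ρ : ℝ} (hac : a ≤ c) (hτ : 0 ≤ τ) (hcb : c + τ ≤ b)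
    (hint : IntervalIntegrable ψ volume a b) (hB : ∀ s ∈ Icc a b, |ψ s| ≤ B)
    (hρ : MapsTo ψ (Ioo c (c + τ)) (Ioo (-ρ) ρ)) :
    ∫ s in a..b, |ψ s| ≤ B * (b - a) - (B - ρ) * τ := by
  have hsub : ∀ c ∈ Icc a b, ∀ d ∈ Icc c b, IntervalIntegrable (|ψ ·|) volume c d :=
    fun c hc d hd => (hint.mono_set (uIcc_subset_uIcc (Icc_subset_uIcc hc)
      (Icc_subset_uIcc ⟨hc.1.trans hd.1, hd.2⟩))).abs
  have hbound : ∀ c ∈ Icc a b, ∀ d ∈ Icc c b, ∫ s in c..d, |ψ s| ≤ B * (d - c) :=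
    fun c hc d hd => by
      have := integral_mono_on hd.1 (hsub c hc d hd) intervalIntegrable_const
        fun s hs => hB s ⟨hc.1.trans hs.1, hs.2.trans hd.2⟩
      rwa [intervalIntegral.integral_const, smul_eq_mul, mul_comm] at this
  have hmid : ∫ s in c..c + τ, |ψ s| ≤ ρ * τ := by
    have := integral_mono_on_of_le_Ioo (le_add_of_nonneg_right hτ)
      (hsub c ⟨hac, by linarith⟩ (c + τ) ⟨by linarith, hcb⟩) intervalIntegrable_const
      fun s hs => abs_le.2 ⟨(hρ hs).1.le, (hρ hs).2.le⟩
    rwa [intervalIntegral.integral_const, smul_eq_mul, add_sub_cancel_left, mul_comm] at this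
  rw [← integral_add_adjacent_intervals (hsub a ⟨le_rfl, by linarith⟩ c ⟨hac, by linarith⟩)
      (hsub c ⟨hac, by linarith⟩ b ⟨by linarith, le_rfl⟩),
    ← integral_add_adjacent_intervals (hsub c ⟨hac, by linarith⟩ (c + τ) ⟨by linarith, hcb⟩)
      (hsub (c + τ) ⟨by linarith, hcb⟩ b ⟨hcb, le_rfl⟩)]
  linarith [hbound a ⟨le_rfl, by linarith⟩ c ⟨hac, by linarith⟩,
    hbound (c + τ) ⟨by linarith, hcb⟩ b ⟨hcb, le_rfl⟩]

theorem integral_abs_le_of_le_half_of_neg_half_le {c S K : ℝ} (hc : c ∈ Icc a b)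
    (hint : IntervalIntegrable ψ volume a b) (hψ : ∀ s ∈ Icc a b, |ψ s| ≤ 3 * S / 2)
    (hK : ∀ c ∈ Icc a b, ∀ d ∈ Icc a b, |∫ s in c..d, ψ s| ≤ K)
    (hlow : ∀ s ∈ Ioo a c, ψ s ≤ S / 2) (hhigh : ∀ s ∈ Ioo c b, -(S / 2) ≤ ψ s) :
    ∫ s in a..b, |ψ s| ≤ 3 * S / 4 * (b - a) + K := by
  have hab : a ≤ b := hc.1.trans hc.2
  have hint_ac : IntervalIntegrable ψ volume a c :=
    hint.mono_set (uIcc_subset_uIcc left_mem_uIcc (Icc_subset_uIcc hc))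
  have hint_cb : IntervalIntegrable ψ volume c b :=
    hint.mono_set (uIcc_subset_uIcc (Icc_subset_uIcc hc) right_mem_uIcc)
  have hleft := integral_abs_le_of_abs_le_of_le_half hc.1 hint_ac
    fun s hs => ⟨hψ s ⟨hs.1.le, hs.2.le.trans hc.2⟩, hlow s hs⟩
  have hright := integral_abs_le_of_abs_le_of_le_half (ψ := (-ψ ·)) hc.2 hint_cb.neg
    fun s hs => ⟨by simpa using hψ s ⟨hc.1.trans hs.1.le, hs.2.le⟩, by linarith [hhigh s hs]⟩
  simp only [abs_neg, intervalIntegral.integral_neg] at hright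
  rw [← integral_add_adjacent_intervals hint_ac.abs hint_cb.abs]
  linarith [abs_le.1 (hK a (left_mem_Icc.2 hab) c hc), abs_le.1 (hK c hc b (right_mem_Icc.2 hab))]

theorem integral_abs_le_window {m S B K : ℝ} (hab : a ≤ b) (hm : 0 < m) (hBS : B ≤ 3 * S / 2)
    (hmono : MonotoneOn (fun s => ψ s + m * s) (Icc a b))
    (hint : IntervalIntegrable ψ volume a b) (hB : ∀ s ∈ Icc a b, |ψ s| ≤ B)
    (hK : ∀ c ∈ Icc a b, ∀ d ∈ Icc a b, |∫ s in c..d, ψ s| ≤ K) :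
    ∫ s in a..b, |ψ s| ≤
      max (3 * S / 4 * (b - a) + K) (B * (b - a) - (B - S / 2) * (S / m)) := by
  have hS : 0 ≤ S := by linarith [(abs_nonneg _).trans (hB a (left_mem_Icc.2 hab))]
  by_cases hcross : ∃ u ∈ Icc a b, ∃ v ∈ Icc a b, u ≤ v ∧ S / 2 ≤ ψ u ∧ ψ v ≤ -(S / 2)
  · obtain ⟨u, hu, v, hv, huv, hψu, hψv⟩ := hcross
    obtain ⟨c, hc, hcv, hmaps⟩ := exists_mapsTo_Ioo_of_monotoneOn_add_mul hm
      (hmono.mono (Icc_subset_Icc hu.1 hv.2)) huv hψu hψv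
    rw [show S / 2 - -(S / 2) = S by ring] at hcv hmaps
    exact le_max_of_le_right (integral_abs_le_of_mapsTo_Ioo (hu.1.trans hc.1)
      (div_nonneg hS hm.le) (hcv.trans hv.2) hint hB hmaps)
  · simp only [not_exists, not_and, not_le] at hcross
    obtain ⟨c, hc, hlow, hhigh⟩ := exists_mem_Icc_forall_Ico_not_and_forall_Ioc_not hab
      (P := fun s => S / 2 ≤ ψ s) (Q := fun s => ψ s ≤ -(S / 2))
      fun u hu v hv huv hP hQ => (hcross u hu v hv huv hP).not_ge hQ
    exact le_max_of_le_left (integral_abs_le_of_le_half_of_neg_half_le hc hint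
      (fun s hs => (hB s hs).trans hBS) hK
      (fun s hs => (not_le.1 (hlow s (Ioo_subset_Ico_self hs))).le)
      fun s hs => (not_le.1 (hhigh s (Ioo_subset_Ioc_self hs))).le)

end Window

theorem integral_le_of_forall_integral_window_le {f : ℝ → ℝ} {a L B β : ℝ} (hL : 0 < L)
    (hB : 0 ≤ B) (hβ : 0 ≤ β) (hint : ∀ c ≥ a, ∀ d ≥ a, IntervalIntegrable f volume c d)
    (hf : ∀ s ≥ a, f s ≤ B) (hwin : ∀ w ≥ a, ∫ s in w..w + L, f s ≤ β * L) :
    ∀ T ≥ a, ∫ s in a..T, f s ≤ β * (T - a) + B * L := by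
  have hshort : ∀ T ∈ Icc a (a + L), ∫ s in a..T, f s ≤ β * (T - a) + B * L := fun T hT => by
    have := integral_mono_on hT.1 (hint a le_rfl T hT.1) intervalIntegrable_const
      fun s hs => hf s hs.1
    rw [intervalIntegral.integral_const, smul_eq_mul] at this
    nlinarith [hT.2, mul_nonneg hβ (sub_nonneg.2 hT.1)]
  have hlong : ∀ n : ℕ, ∀ T ∈ Icc a (a + n * L), ∫ s in a..T, f s ≤ β * (T - a) + B * L := by
    intro n
    induction n with
    | zero => exact fun T hT => hshort T ⟨hT.1, by linarith [hT.2, show (0 : ℕ) * L = 0 by simp]⟩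
    | succ n ih =>
      intro T hT
      by_cases hTL : T ≤ a + L
      · exact hshort T ⟨hT.1, hTL⟩
      have hprev := ih (T - L) ⟨by linarith, by push_cast at hT; linarith [hT.2]⟩
      have hlast := hwin (T - L) (by linarith)
      rw [sub_add_cancel] at hlast
      rw [← integral_add_adjacent_intervals (hint a le_rfl (T - L) (by linarith))
        (hint (T - L) (by linarith) T hT.1)]
      linarith
  intro T hT
  obtain ⟨n, hn⟩ := exists_nat_ge ((T - a) / L)
  exact hlong n T ⟨hT, by rw [div_le_iff₀ hL] at hn; linarith⟩

theorem abs_integral_le_two_mul {ψ : ℝ → ℝ} {a K c d : ℝ}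
    (hint : ∀ c ≥ a, ∀ d ≥ a, IntervalIntegrable ψ volume c d)
    (hK : ∀ T ≥ a, |∫ s in a..T, ψ s| ≤ K) (hc : a ≤ c) (hd : a ≤ d) :
    |∫ s in c..d, ψ s| ≤ 2 * K := by
  rw [← integral_interval_sub_left (hint a le_rfl d hd) (hint a le_rfl c hc)]
  linarith [abs_sub (∫ s in a..d, ψ s) (∫ s in a..c, ψ s), hK c hc, hK d hd]

section MulExp

variable {ψ : ℝ → ℝ} {M : ℝ}

theorem mul_exp_sub_le_of_monotoneOn_mul_exp {I : Set ℝ}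
    (hmono : MonotoneOn (fun s => (ψ s + M) * exp s) I) {s t : ℝ} (hs : s ∈ I) (ht : t ∈ I)
    (hst : s ≤ t) : (ψ s + M) * exp (s - t) ≤ ψ t + M := by
  rw [exp_sub, ← mul_div_assoc, div_le_iff₀ (exp_pos t)]
  exact hmono hs ht hst

theorem monotoneOn_add_mul_of_monotoneOn_mul_exp {m : ℝ} {I : Set ℝ}
    (hmono : MonotoneOn (fun s => (ψ s + M) * exp s) I) (hm : 0 ≤ m) (hψ : ∀ s ∈ I, ψ s + M ≤ m) :
    MonotoneOn (fun s => ψ s + m * s) I := by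
  intro s hs t ht hst
  have hdecay := mul_exp_sub_le_of_monotoneOn_mul_exp hmono hs ht hst
  have hexp : 1 - exp (s - t) ≤ t - s := by linarith [add_one_le_exp (s - t)]
  have hexp' : 0 ≤ 1 - exp (s - t) := sub_nonneg.2 (exp_le_one_iff.2 (by linarith))
  nlinarith [mul_le_mul_of_nonneg_right (hψ s hs) hexp', mul_le_mul_of_nonneg_left hexp hm]

theorem intervalIntegrable_of_monotoneOn_mul_exp {a b c : ℝ}
    (hmono : MonotoneOn (fun s => (ψ s + M) * exp s) (Ici a)) (hb : a ≤ b) (hc : a ≤ c) :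
    IntervalIntegrable ψ volume b c := by
  have hmon : IntervalIntegrable (fun s => (ψ s + M) * exp s) volume b c :=
    (hmono.mono fun s hs => (le_min hb hc).trans hs.1).intervalIntegrable
  convert (hmon.mul_continuousOn (continuous_exp.comp continuous_neg).continuousOn).sub
    (intervalIntegrable_const (c := M)) using 1
  funext s
  simp [mul_assoc, ← exp_add]

variable {K s : ℝ}

theorem le_of_monotoneOn_mul_exp (hM : 0 ≤ M)
    (hmono : MonotoneOn (fun s => (ψ s + M) * exp s) (Ici 0))
    (hK : ∀ c ≥ 0, ∀ d ≥ 0, |∫ t in c..d, ψ t| ≤ K) (hs : 0 ≤ s) :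
    ψ s ≤ exp 1 * (K + M) := by
  have hK0 : 0 ≤ K := (abs_nonneg _).trans (hK s hs s hs)
  rcases le_or_gt (ψ s + M) 0 with hp | hp
  · nlinarith [exp_pos 1]
  have hlow : ∀ t ∈ Icc s (s + 1), (ψ s + M) * exp (-1) ≤ ψ t + M := fun t ht =>
    (mul_le_mul_of_nonneg_left (exp_le_exp.2 (by linarith [ht.2])) hp.le).trans
      (mul_exp_sub_le_of_monotoneOn_mul_exp hmono hs (hs.trans ht.1) ht.1)
  have hint : IntervalIntegrable ψ volume s (s + 1) :=
    intervalIntegrable_of_monotoneOn_mul_exp hmono hs (by linarith)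
  have := integral_mono_on (by linarith) intervalIntegrable_const
    (hint.add intervalIntegrable_const) hlow
  rw [intervalIntegral.integral_const, integral_add hint intervalIntegrable_const,
    intervalIntegral.integral_const] at this
  simp only [add_sub_cancel_left, one_smul] at this
  have he : exp (-1) * exp 1 = 1 := by rw [← exp_add]; simp
  nlinarith [(abs_le.1 (hK s hs (s + 1) (by linarith))).2, exp_pos 1, one_le_exp zero_le_one,
    mul_le_mul_of_nonneg_right this (exp_pos 1).le]

theorem neg_le_of_monotoneOn_mul_exp (hM : 0 ≤ M)
    (hmono : MonotoneOn (fun s => (ψ s + M) * exp s) (Ici 0))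
    (hK : ∀ c ≥ 0, ∀ d ≥ 0, |∫ t in c..d, ψ t| ≤ K) (hs : 1 ≤ s) :
    -(K + M) ≤ ψ s := by
  rcases le_or_gt 0 (ψ s + M) with hp | hp
  · linarith [(abs_nonneg _).trans (hK s (by linarith) s (by linarith))]
  have hup : ∀ t ∈ Icc (s - 1) s, ψ t + M ≤ ψ s + M := fun t ht => by
    have h := hmono (mem_Ici.2 (by linarith [ht.1])) (mem_Ici.2 (by linarith)) ht.2
    calc ψ t + M ≤ (ψ s + M) * exp (s - t) := by
          rw [exp_sub, ← mul_div_assoc, le_div_iff₀ (exp_pos t)]; exact h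
      _ ≤ ψ s + M := mul_le_of_one_le_right hp.le (one_le_exp (by linarith [ht.2]))
  have hint : IntervalIntegrable ψ volume (s - 1) s :=
    intervalIntegrable_of_monotoneOn_mul_exp hmono (by linarith) (by linarith)
  have := integral_mono_on (by linarith) (hint.add intervalIntegrable_const)
    intervalIntegrable_const hup
  rw [intervalIntegral.integral_const, integral_add hint intervalIntegrable_const,
    intervalIntegral.integral_const] at this
  simp only [sub_sub_cancel, one_smul] at this
  linarith [(abs_le.1 (hK (s - 1) (by linarith) s (by linarith))).1]

theorem abs_le_of_monotoneOn_mul_exp (hM : 0 ≤ M)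
    (hmono : MonotoneOn (fun s => (ψ s + M) * exp s) (Ici 0))
    (hK : ∀ c ≥ 0, ∀ d ≥ 0, |∫ t in c..d, ψ t| ≤ K) (hs : 1 ≤ s) :
    |ψ s| ≤ exp 1 * (K + M) := by
  have hK0 : 0 ≤ K := (abs_nonneg _).trans (hK s (by linarith) s (by linarith))
  refine abs_le.2 ⟨?_, le_of_monotoneOn_mul_exp hM hmono hK (by linarith)⟩
  nlinarith [neg_le_of_monotoneOn_mul_exp hM hmono hK hs, one_le_exp zero_le_one]

end MulExp

theorem eventually_le_mul_of_le_mul_add {F : ℝ → ℝ} {β β' C : ℝ} (hβ : β < β')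
    (h : ∀ᶠ T in atTop, F T ≤ β * T + C) : ∀ᶠ T in atTop, F T ≤ β' * T := by
  filter_upwards [h, eventually_ge_atTop (C / (β' - β))] with T hT hTC
  rw [div_le_iff₀ (sub_pos.2 hβ)] at hTC
  linarith

theorem exists_lt_eventually_integral_abs_le {ψ : ℝ → ℝ} {M K S : ℝ} (hM : 0 ≤ M) (hS : 0 < S)
    (hmono : MonotoneOn (fun s => (ψ s + M) * exp s) (Ici 0))
    (hK : ∀ c ≥ 0, ∀ d ≥ 0, |∫ t in c..d, ψ t| ≤ K)
    (hlim : ∀ ε > 0, ∀ᶠ s in atTop, |ψ s| ≤ S + ε) :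
    ∃ β < S, ∀ᶠ T in atTop, ∫ s in 0..T, |ψ s| ≤ β * T := by
  have hK0 : 0 ≤ K := (abs_nonneg _).trans (hK 0 le_rfl 0 le_rfl)
  have hint : ∀ c ≥ 0, ∀ d ≥ 0, IntervalIntegrable ψ volume c d := fun c hc d hd =>
    intervalIntegrable_of_monotoneOn_mul_exp hmono hc hd
  set m := M + 2 * S
  set L := 8 * K / S + 1
  set τ := S / m
  -- small enough that both bounds of `integral_abs_le_window` are at most `(S - ε) * L`
  set ε := min (S / 8) (S * τ / (4 * L))
  have hm : 0 < m := by positivity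
  have hτ : 0 < τ := by positivity
  have hL : 0 < L := by positivity
  have hSL : S * L = 8 * K + S := by rw [mul_add, mul_one, mul_div_cancel₀ _ hS.ne']
  have hε : 0 < ε := lt_min (by positivity) (by positivity)
  have hεS : ε ≤ S / 8 := min_le_left _ _
  have hεL : ε * (4 * L) ≤ S * τ := (le_div_iff₀ (by positivity)).1 (min_le_right _ _)
  obtain ⟨σ, hσ⟩ := eventually_atTop.1 ((hlim ε hε).and (eventually_ge_atTop 0))
  have hσ0 : 0 ≤ σ := (hσ σ le_rfl).2
  have hlip : MonotoneOn (fun s => ψ s + m * s) (Ici σ) :=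
    monotoneOn_add_mul_of_monotoneOn_mul_exp (hmono.mono (Ici_subset_Ici.2 hσ0)) hm.le
      fun s hs => by linarith [le_abs_self (ψ s), (hσ s hs).1]
  have hwin : ∀ w ≥ σ, ∫ s in w..w + L, |ψ s| ≤ (S - ε) * L := fun w hw => by
    have hw0 : 0 ≤ w := hσ0.trans hw
    refine (integral_abs_le_window (S := S) (by linarith) hm (by linarith)
      (hlip.mono fun s hs => hw.trans hs.1) (hint w hw0 (w + L) (by linarith))
      (fun s hs => (hσ s (hw.trans hs.1)).1)
      fun c hc d hd => hK c (hw0.trans hc.1) d (hw0.trans hd.1)).trans (max_le ?_ ?_)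
    · rw [add_sub_cancel_left]
      nlinarith [mul_le_mul_of_nonneg_right hεS hL.le]
    · rw [add_sub_cancel_left]
      nlinarith [mul_pos hε hτ]
  have hsum := integral_le_of_forall_integral_window_le hL (by linarith) (by linarith)
    (fun c hc d hd => (hint c (hσ0.trans hc) d (hσ0.trans hd)).abs) (fun s hs => (hσ s hs).1) hwin
  refine ⟨S - ε / 2, by linarith, eventually_le_mul_of_le_mul_add (β := S - ε)
    (C := (∫ s in 0..σ, |ψ s|) + (S + ε) * L) (by linarith) ?_⟩
  filter_upwards [eventually_ge_atTop σ] with T hTσ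
  rw [← integral_add_adjacent_intervals (hint 0 le_rfl σ hσ0).abs
    (hint σ hσ0 T (hσ0.trans hTσ)).abs]
  nlinarith [hsum T hTσ, mul_nonneg (by linarith : 0 ≤ S - ε) hσ0]

noncomputable def logScale (g : ℝ → ℝ) (s : ℝ) : ℝ := g (exp s) / exp s

section LogScale

variable {g : ℝ → ℝ}

theorem abs_logScale_log {x : ℝ} (hx : 0 < x) : |logScale g (log x)| = |g x| / x := by
  rw [logScale, exp_log hx, abs_div, abs_of_pos hx]

theorem integral_logScale (g : ℝ → ℝ) (T : ℝ) :
    ∫ s in 0..T, logScale g s = ∫ t in 1..exp T, g t / t ^ 2 := by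
  rw [← exp_zero, ← integral_comp_mul_deriv_of_deriv_nonneg continuousOn_exp
    (fun s _ => hasDerivAt_exp s) fun s _ => (exp_pos s).le]
  congr 1 with s
  simp only [logScale, Function.comp_apply]
  field_simp

theorem monotoneOn_logScale_add_mul_exp {M : ℝ}
    (h : ∀ x y, 1 ≤ x → x ≤ y → g x + M * x ≤ g y + M * y) :
    MonotoneOn (fun s => (logScale g s + M) * exp s) (Ici 0) := fun s hs t _ hst => by
  simp only [logScale, add_mul, div_mul_cancel₀ _ (exp_pos _).ne']
  exact h _ _ (one_le_exp hs) (exp_le_exp.2 hst)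

theorem limsup_mean_le_of_eventually_integral_abs_logScale_le {β : ℝ}
    (h : ∀ᶠ T in atTop, ∫ s in 0..T, |logScale g s| ≤ β * T) :
    limsup (fun x => (1 / log x) * ∫ t in (1:ℝ)..x, |g t| / t ^ 2) atTop ≤ β := by
  refine limsup_le_of_le (isCoboundedUnder_le_of_eventually_le atTop (x := 0)
    ((eventually_ge_atTop 1).mono fun x hx => mul_nonneg (one_div_nonneg.2 (log_nonneg hx))
      (integral_nonneg hx fun t _ => by positivity))) ?_
  filter_upwards [tendsto_log_atTop.eventually (h.and (eventually_gt_atTop 0)),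
    eventually_gt_atTop 0] with x ⟨hx, hlog⟩ hx0
  have habs : ∀ s, |logScale g s| = logScale (|g ·|) s := fun s => by
    rw [logScale, logScale, abs_div, abs_of_pos (exp_pos s)]
  simp only [habs, integral_logScale, exp_log hx0] at hx
  rw [one_div, inv_mul_le_iff₀ hlog]
  linarith

end LogScale

theorem erdos_tauberian_general
    (g : ℝ → ℝ) (M M' : ℝ) (hM : 0 ≤ M)
    (h1 : ∀ x y, 1 ≤ x → x ≤ y → g x + M * x ≤ g y + M * y)
    (h2 : ∀ x : ℝ, 1 ≤ x → |∫ t in (1:ℝ)..x, g t / t ^ 2| ≤ M') :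
    IsBoundedUnder (· ≤ ·) atTop (fun x : ℝ => |g x| / x) ∧
    (0 < limsup (fun x : ℝ => |g x| / x) atTop →
      limsup (fun x : ℝ => (1 / Real.log x) * ∫ t in (1:ℝ)..x, |g t| / t ^ 2) atTop
        < limsup (fun x : ℝ => |g x| / x) atTop) := by
  have hmono := monotoneOn_logScale_add_mul_exp h1
  have hK : ∀ c ≥ 0, ∀ d ≥ 0, |∫ s in c..d, logScale g s| ≤ 2 * M' := fun c hc d hd =>
    abs_integral_le_two_mul (fun c hc d hd => intervalIntegrable_of_monotoneOn_mul_exp hmono hc hd)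
      (fun T hT => by rw [integral_logScale]; exact h2 _ (one_le_exp hT)) hc hd
  have hbdd : IsBoundedUnder (· ≤ ·) atTop (fun x => |g x| / x) :=
    isBoundedUnder_of_eventually_le <| (eventually_ge_atTop (exp 1)).mono fun x hx => by
      have hx0 := (exp_pos 1).trans_le hx
      rw [← abs_logScale_log hx0]
      exact abs_le_of_monotoneOn_mul_exp hM hmono hK ((le_log_iff_exp_le hx0).2 hx)
  refine ⟨hbdd, fun hS => ?_⟩
  have hlim : ∀ ε > 0, ∀ᶠ s in atTop, |logScale g s| ≤ limsup (fun x => |g x| / x) atTop + ε :=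
    fun ε hε => (tendsto_exp_atTop.eventually (eventually_lt_of_limsup_lt
      (lt_add_of_pos_right _ hε) hbdd)).mono fun s hs => by
        simpa only [← abs_logScale_log (exp_pos s), log_exp] using hs.le
  obtain ⟨β, hβ, hev⟩ := exists_lt_eventually_integral_abs_le hM hS hmono hK hlim
  exact (limsup_mean_le_of_eventually_integral_abs_logScale_le hev).trans_lt hβ

/-- The Tauberian theorem attributed to Erdős. -/
theorem erdos_tauberian
    (g : ℝ → ℝ) (M M' : ℝ) (hM : 0 ≤ M) (hM' : 0 ≤ M')
    (h1 : ∀ x y, 1 ≤ x → x ≤ y → g x + M * x ≤ g y + M * y)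
    (h2 : ∀ x : ℝ, 1 ≤ x → |∫ t in (1:ℝ)..x, g t / t ^ 2| ≤ M') :
    IsBoundedUnder (· ≤ ·) atTop (fun x : ℝ => |g x| / x) ∧
    (0 < limsup (fun x : ℝ => |g x| / x) atTop →
      limsup (fun x : ℝ => (1 / Real.log x) * ∫ t in (1:ℝ)..x, |g t| / t ^ 2) atTop
        < limsup (fun x : ℝ => |g x| / x) atTop) :=
  erdos_tauberian_general g M M' hM h1 h2
end

section
/- Let f : [1,∞) → ℝ be any function and F(x) = Σ_{n ≤ x} f(x/n). Then for every x ≥ 1 the Tatuzawa–Iseki identity holds: f(x)·log x + Σ_{n ≤ x} Λ(n)·f(x/n) = Σ_{n ≤ x} μ(n)·log(x/n)·F(x/n), where the sums run over positive integers n ≤ x. -/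
open Filter Real Finset ArithmeticFunction

/-! Expanding `F (x / n)` turns the right-hand side into
`∑_{k ≤ x} (∑_{d ∣ k} μ(d) log (x / d)) f (x / k)`. Writing `log (x / d) = log x - log d`, the
inner sum is `log x · [k = 1] + Λ(k)`, because `μ * 1 = ε` and `μ * log = -Λ`. -/

theorem sum_divisors_moebius_eq_ite (k : ℕ) :
    ∑ d ∈ k.divisors, (moebius d : ℝ) = if k = 1 then 1 else 0 := by
  have := congrArg (· k) (coe_moebius_mul_coe_zeta (R := ℝ))
  simpa only [coe_mul_zeta_apply, one_apply, intCoe_apply] using this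

theorem sum_divisors_moebius_mul_log_div {x : ℝ} (hx : x ≠ 0) (k : ℕ) :
    ∑ d ∈ k.divisors, (moebius d : ℝ) * Real.log (x / d)
      = (if k = 1 then Real.log x else 0) + Λ k := by
  have log_div_split : ∀ d ∈ k.divisors, (moebius d : ℝ) * Real.log (x / d)
      = (moebius d : ℝ) * Real.log x - (moebius d : ℝ) * Real.log d := by
    intro d hd
    rw [Real.log_div hx (Nat.cast_ne_zero.mpr (Nat.pos_of_mem_divisors hd).ne'), mul_sub]
  have sum_moebius_mul_log : ∑ d ∈ k.divisors, (moebius d : ℝ) * Real.log d = -Λ k := by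
    simpa only [log_apply] using sum_moebius_mul_log_eq (n := k)
  rw [sum_congr rfl log_div_split, sum_sub_distrib, ← sum_mul, sum_divisors_moebius_eq_ite,
    sum_moebius_mul_log]
  split_ifs <;> ring

theorem sum_Icc_div_mul_eq_sum_filter_dvd {M : Type*} [AddCommMonoid M] {d : ℕ} (hd : 0 < d)
    (N : ℕ) (g : ℕ → M) :
    ∑ m ∈ Icc 1 (N / d), g (d * m) = ∑ k ∈ Icc 1 N with d ∣ k, g k := by
  symm
  refine sum_nbij' (· / d) (d * ·) ?_ ?_ ?_ ?_ ?_
  · rintro k hk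
    simp only [mem_filter, mem_Icc] at hk ⊢
    obtain ⟨⟨hk1, hkN⟩, m, rfl⟩ := hk
    rw [Nat.mul_div_cancel_left m hd, Nat.le_div_iff_mul_le hd]
    constructor <;> nlinarith
  · rintro m hm
    simp only [mem_filter, mem_Icc] at hm ⊢
    rw [Nat.le_div_iff_mul_le hd] at hm
    exact ⟨⟨by nlinarith, by linarith⟩, dvd_mul_right d m⟩
  · rintro k hk
    exact Nat.mul_div_cancel' (mem_filter.mp hk).2
  · rintro m -
    exact Nat.mul_div_cancel_left m hd
  · rintro k hk
    rw [Nat.mul_div_cancel' (mem_filter.mp hk).2]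

theorem sum_Icc_sum_Icc_div_mul_eq_sum_Icc_sum_divisors {M : Type*} [AddCommMonoid M]
    (N : ℕ) (H : ℕ → ℕ → M) :
    ∑ d ∈ Icc 1 N, ∑ m ∈ Icc 1 (N / d), H d (d * m)
      = ∑ k ∈ Icc 1 N, ∑ d ∈ k.divisors, H d k := by
  rw [sum_congr rfl fun d hd => sum_Icc_div_mul_eq_sum_filter_dvd (mem_Icc.mp hd).1 N (H d)]
  refine sum_comm' fun d k => ?_
  simp only [mem_filter, mem_Icc, Nat.mem_divisors]
  constructor
  · rintro ⟨-, ⟨hk1, hkN⟩, hdk⟩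
    exact ⟨⟨hdk, by omega⟩, hk1, hkN⟩
  · rintro ⟨⟨hdk, -⟩, hk1, hkN⟩
    have hdk_le := Nat.le_of_dvd hk1 hdk
    exact ⟨⟨Nat.pos_of_dvd_of_pos hdk hk1, by omega⟩, ⟨hk1, hkN⟩, hdk⟩

/-- The Tatuzawa–Iseki identity. -/
theorem tatuzawa_iseki
    (f : ℝ → ℝ)
    (F : ℝ → ℝ) (hF : ∀ x : ℝ, F x = ∑ n ∈ Finset.Icc 1 ⌊x⌋₊, f (x / n)) :
    ∀ x : ℝ, 1 ≤ x →
      f x * Real.log x + ∑ n ∈ Finset.Icc 1 ⌊x⌋₊, Λ n * f (x / n)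
        = ∑ n ∈ Finset.Icc 1 ⌊x⌋₊,
            (moebius n : ℝ) * Real.log (x / n) * F (x / n) := by
  intro x hx
  have expand_F : ∀ n ∈ Icc 1 ⌊x⌋₊, (moebius n : ℝ) * Real.log (x / n) * F (x / n)
      = ∑ m ∈ Icc 1 (⌊x⌋₊ / n), (moebius n : ℝ) * Real.log (x / n) * f (x / ↑(n * m)) := by
    intro n _
    rw [hF, Nat.floor_div_natCast, mul_sum]
    simp only [Nat.cast_mul, div_div]
  have one_mem : 1 ∈ Icc 1 ⌊x⌋₊ := mem_Icc.mpr ⟨le_rfl, Nat.one_le_floor_iff x |>.mpr hx⟩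
  calc f x * Real.log x + ∑ n ∈ Icc 1 ⌊x⌋₊, Λ n * f (x / n)
      = ∑ k ∈ Icc 1 ⌊x⌋₊, ((if k = 1 then Real.log x else 0) + Λ k) * f (x / k) := by
        simp only [add_mul, sum_add_distrib, ite_mul, zero_mul, sum_ite_eq', if_pos one_mem,
          Nat.cast_one, div_one, mul_comm (f x)]
    _ = ∑ k ∈ Icc 1 ⌊x⌋₊, ∑ d ∈ k.divisors, (moebius d : ℝ) * Real.log (x / d) * f (x / k) := by
        simp only [← sum_mul, sum_divisors_moebius_mul_log_div (by positivity : x ≠ 0)]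
    _ = ∑ n ∈ Icc 1 ⌊x⌋₊, (moebius n : ℝ) * Real.log (x / n) * F (x / n) := by
        rw [sum_congr rfl expand_F]
        exact (sum_Icc_sum_Icc_div_mul_eq_sum_Icc_sum_divisors _
          fun d k => (moebius d : ℝ) * Real.log (x / d) * f (x / k)).symm
end

section
/- For every positive integer n, Selberg's identity holds: Λ(n)·log n + Σ_{d | n} Λ(d)·Λ(n/d) = Σ_{d | n} μ(d)·log²(n/d), where the sums run over the positive divisors d of n. -/
open Real Finset ArithmeticFunction
open scoped ArithmeticFunction.zeta ArithmeticFunction.Moebius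

/-!
Pointwise multiplication by `log` is a derivation of the Dirichlet convolution ring, since
`log (a * b) = log a + log b`. Applying it to `μ * ζ = 1` gives `(log · μ) * ζ = -Λ`, i.e.
`log · μ = -(Λ * μ)`; applying it to `μ * log = Λ` then gives
`log · Λ + Λ * Λ = μ * log²`, which evaluated at `n` is Selberg's identity.
-/

namespace ArithmeticFunction

theorem log_pmul_mul (f g : ArithmeticFunction ℝ) :
    log.pmul (f * g) = log.pmul f * g + f * log.pmul g := by
  ext n
  simp only [pmul_apply, mul_apply, add_apply, log_apply, ← sum_add_distrib, mul_sum]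
  refine sum_congr rfl fun p hp => ?_
  obtain ⟨hpn, -⟩ := Nat.mem_divisorsAntidiagonal.mp hp
  rw [← hpn, Nat.cast_mul, Real.log_mul
    (Nat.cast_ne_zero.mpr (Nat.left_ne_zero_of_mem_divisorsAntidiagonal hp))
    (Nat.cast_ne_zero.mpr (Nat.right_ne_zero_of_mem_divisorsAntidiagonal hp))]
  ring

theorem log_pmul_one : log.pmul (1 : ArithmeticFunction ℝ) = 0 := by
  ext n
  simp only [pmul_apply, one_apply, log_apply, zero_apply]
  split_ifs with h <;> simp [h]

theorem log_pmul_moebius : log.pmul (μ : ArithmeticFunction ℝ) = -(Λ * μ) := by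
  have hζ : log.pmul (μ : ArithmeticFunction ℝ) * ζ = -Λ := by
    have h := log_pmul_mul (μ : ArithmeticFunction ℝ) ζ
    rw [coe_moebius_mul_coe_zeta, log_pmul_one, pmul_zeta,
      moebius_mul_log_eq_vonMangoldt] at h
    linear_combination -h
  calc log.pmul (μ : ArithmeticFunction ℝ)
      = log.pmul (μ : ArithmeticFunction ℝ) * ζ * μ := by
        rw [mul_assoc, coe_zeta_mul_coe_moebius, mul_one]
    _ = -(Λ * μ) := by rw [hζ, neg_mul]

theorem log_pmul_vonMangoldt_add_vonMangoldt_mul_self :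
    log.pmul Λ + Λ * Λ = (μ : ArithmeticFunction ℝ) * log.pmul log := by
  have h := log_pmul_mul (μ : ArithmeticFunction ℝ) log
  rw [moebius_mul_log_eq_vonMangoldt, log_pmul_moebius, neg_mul, mul_assoc,
    moebius_mul_log_eq_vonMangoldt] at h
  linear_combination h

end ArithmeticFunction

theorem selberg_identity_general (n : ℕ) :
    Λ n * Real.log n + ∑ d ∈ n.divisors, Λ d * Λ (n / d)
      = ∑ d ∈ n.divisors, (moebius d : ℝ) * (Real.log ((n / d : ℕ) : ℝ)) ^ 2 := by
  have h := congrArg (· n) log_pmul_vonMangoldt_add_vonMangoldt_mul_self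
  simp only [ArithmeticFunction.add_apply, pmul_apply, log_apply, mul_apply, intCoe_apply] at h
  rw [Nat.sum_divisorsAntidiagonal (fun a b => Λ a * Λ b),
    Nat.sum_divisorsAntidiagonal (fun a b => (μ a : ℝ) * (Real.log b * Real.log b))] at h
  simpa only [mul_comm (Λ n), sq] using h

/-- Selberg's identity. -/
theorem selberg_identity (n : ℕ) (hn : 0 < n) :
    Λ n * Real.log n + ∑ d ∈ n.divisors, Λ d * Λ (n / d)
      = ∑ d ∈ n.divisors, (moebius d : ℝ) * (Real.log ((n / d : ℕ) : ℝ)) ^ 2 :=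
  selberg_identity_general n
end

section
/- The sums Σ_{n ≤ x} (μ(n)/n)·log(x/n) are bounded: there is a constant C such that |Σ_{n ≤ x} (μ(n)/n)·log(x/n)| ≤ C for all x ≥ 1, where the sum runs over positive integers n ≤ x. -/
/-!
Since `⌊x / n⌋₊ = ⌊x⌋₊ / n`, we may write `log (x / n) = H (⌊x⌋₊ / n) - γ + E (x / n)`, where
`H` is the harmonic sum and `|E t| ≤ 2 / t` for `t ≥ 1`. The harmonic part sums to exactly `1`:
`∑_{n ≤ N} μ(n)/n · H(N/n) = ∑_{k ≤ N} (1/k) ∑_{d ∣ k} μ(d) = 1`. The `γ` part is `γ` times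
`∑_{n ≤ N} μ(n)/n`, which is at most `2` in absolute value by the identity
`∑_{n ≤ N} μ(n) ⌊N/n⌋ = 1`. The error terms contribute at most `∑_{n ≤ x} (1/n)(2n/x) ≤ 2`.
-/

open Real Finset ArithmeticFunction
open scoped ArithmeticFunction.Moebius ArithmeticFunction.zeta

namespace ArithmeticFunction

theorem pmul_mul_pmul_of_map_mul {R : Type*} [CommSemiring R] (f g h : ArithmeticFunction R)
    (hh : ∀ a b, h (a * b) = h a * h b) : f.pmul h * g.pmul h = (f * g).pmul h := by
  ext n
  simp only [mul_apply, pmul_apply, sum_mul]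
  refine sum_congr rfl fun p hp => ?_
  rw [← (Nat.mem_divisorsAntidiagonal.mp hp).1, hh]
  ring

theorem sum_Icc_one_apply {R : Type*} [Semiring R] {N : ℕ} (hN : 1 ≤ N) :
    ∑ n ∈ Icc 1 N, (1 : ArithmeticFunction R) n = 1 := by
  simp [one_apply, hN]

theorem sum_Icc_moebius_mul_div {R : Type*} [Ring R] {N : ℕ} (hN : 1 ≤ N) :
    ∑ n ∈ Icc 1 N, (μ n : R) * (N / n : ℕ) = 1 := by
  have := sum_Ioc_mul_zeta_eq_sum (μ : ArithmeticFunction R) N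
  rw [coe_moebius_mul_coe_zeta, ← Icc_add_one_left_eq_Ioc, zero_add, sum_Icc_one_apply hN] at this
  simpa only [intCoe_apply] using this.symm

end ArithmeticFunction

theorem sum_moebius_div_mul_harmonic_div {N : ℕ} (hN : 1 ≤ N) :
    ∑ n ∈ Icc 1 N, (μ n : ℝ) / n * harmonic (N / n) = 1 := by
  let ι : ArithmeticFunction ℝ := ⟨fun n => (n : ℝ)⁻¹, by simp⟩
  have hι : ∀ a b, ι (a * b) = ι a * ι b := fun a b => by simp [ι, mul_comm]
  have h := sum_Ioc_mul_eq_sum_sum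
    ((μ : ArithmeticFunction ℝ).pmul ι) ((ζ : ArithmeticFunction ℝ).pmul ι) N
  rw [pmul_mul_pmul_of_map_mul _ _ _ hι, coe_moebius_mul_coe_zeta, zeta_pmul,
    ← Icc_add_one_left_eq_Ioc, zero_add] at h
  refine (sum_congr rfl fun n _ => ?_).trans (h.symm.trans ?_)
  · simp only [pmul_apply]
    simp [ι, harmonic_eq_sum_Icc, ← Icc_add_one_left_eq_Ioc, div_eq_mul_inv]
  · simp only [pmul_apply]
    simp [ι, one_apply, hN]

theorem abs_sum_moebius_div_le_two {N : ℕ} (hN : 1 ≤ N) :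
    |∑ n ∈ Icc 1 N, (μ n : ℝ) / n| ≤ 2 := by
  have hN0 : (0 : ℝ) < N := by exact_mod_cast hN
  have hsplit : (N : ℝ) * ∑ n ∈ Icc 1 N, (μ n : ℝ) / n
      = 1 + ∑ n ∈ Icc 1 N, (μ n : ℝ) * Int.fract ((N : ℝ) / n) := by
    rw [mul_sum, ← sum_Icc_moebius_mul_div hN, ← sum_add_distrib]
    refine sum_congr rfl fun n _ => ?_
    rw [Int.fract, ← natCast_floor_eq_intCast_floor (by positivity), Nat.floor_div_natCast,
      Nat.floor_natCast]
    ring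
  have hfract : |∑ n ∈ Icc 1 N, (μ n : ℝ) * Int.fract ((N : ℝ) / n)| ≤ N := by
    calc _ ≤ ∑ n ∈ Icc 1 N, |(μ n : ℝ) * Int.fract ((N : ℝ) / n)| := abs_sum_le_sum_abs _ _
      _ ≤ ∑ n ∈ Icc 1 N, (1 : ℝ) := sum_le_sum fun n _ => by
          rw [abs_mul, abs_of_nonneg (Int.fract_nonneg ((N : ℝ) / n))]
          exact mul_le_one₀ (mod_cast abs_moebius_le_one) (Int.fract_nonneg _)
            (Int.fract_lt_one _).le
      _ = N := by simp
  have hN1 : (1 : ℝ) ≤ N := by exact_mod_cast hN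
  refine le_of_mul_le_mul_left ?_ hN0
  calc N * |∑ n ∈ Icc 1 N, (μ n : ℝ) / n|
        = |1 + ∑ n ∈ Icc 1 N, (μ n : ℝ) * Int.fract ((N : ℝ) / n)| := by
        rw [← hsplit, abs_mul, abs_of_pos hN0]
    _ ≤ 1 + N := (abs_add_le _ _).trans (by rw [abs_one]; exact add_le_add_right hfract 1)
    _ ≤ N * 2 := by linarith

theorem abs_log_sub_harmonic_floor_add_eulerMascheroniConstant_le {t : ℝ} (ht : 1 ≤ t) :
    |Real.log t - harmonic ⌊t⌋₊ + eulerMascheroniConstant| ≤ 2 / t := by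
  set k := ⌊t⌋₊
  have hk : 1 ≤ k := Nat.one_le_floor_iff t |>.mpr ht
  have hk1 : (1 : ℝ) ≤ k := by exact_mod_cast hk
  have hkt : (k : ℝ) ≤ t := Nat.floor_le (by linarith)
  have htk : t < k + 1 := Nat.lt_floor_add_one t
  have hγ_lt : eulerMascheroniConstant < harmonic k - Real.log k := by
    have := eulerMascheroniConstant_lt_eulerMascheroniSeq' k
    rwa [eulerMascheroniSeq', if_neg (by omega)] at this
  have hγ_gt : harmonic k - Real.log (k + 1) < eulerMascheroniConstant :=
    eulerMascheroniSeq_lt_eulerMascheroniConstant k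
  have hlog_le : Real.log t ≤ Real.log (k + 1) := Real.log_le_log (by linarith) htk.le
  have hlog_ge : Real.log k ≤ Real.log t := Real.log_le_log (by linarith) hkt
  have hlog_succ : Real.log (k + 1) - Real.log k ≤ 1 / k := by
    rw [← Real.log_div (by positivity) (by positivity)]
    calc Real.log ((k + 1) / k) ≤ (k + 1) / k - 1 := Real.log_le_sub_one_of_pos (by positivity)
      _ = 1 / k := by field_simp; ring
  have hk_le : 1 / (k : ℝ) ≤ 2 / t := by
    rw [div_le_div_iff₀ (by positivity) (by linarith)]
    linarith
  rw [abs_le]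
  constructor <;> linarith

theorem abs_sum_moebius_div_mul_harmonic_error_le {x : ℝ} (hx : 1 ≤ x) :
    |∑ n ∈ Icc 1 ⌊x⌋₊, (μ n : ℝ) / n *
        (Real.log (x / n) - harmonic ⌊x / n⌋₊ + eulerMascheroniConstant)| ≤ 2 := by
  have hx0 : 0 < x := by linarith
  calc _ ≤ ∑ n ∈ Icc 1 ⌊x⌋₊, 2 / x := (abs_sum_le_sum_abs _ _).trans (sum_le_sum fun n hn => ?_)
    _ = ⌊x⌋₊ * (2 / x) := by simp
    _ ≤ x * (2 / x) := by gcongr; exact Nat.floor_le hx0.le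
    _ = 2 := by field_simp
  have hn0 : (0 : ℝ) < n := by exact_mod_cast (mem_Icc.mp hn).1
  have hxn : 1 ≤ x / n := by
    rw [le_div_iff₀ hn0, one_mul]
    exact (Nat.cast_le.mpr (mem_Icc.mp hn).2).trans (Nat.floor_le hx0.le)
  calc |(μ n : ℝ) / n * (Real.log (x / n) - harmonic ⌊x / n⌋₊ + eulerMascheroniConstant)|
      = |(μ n : ℝ)| / n * |Real.log (x / n) - harmonic ⌊x / n⌋₊ + eulerMascheroniConstant| := by
        rw [abs_mul, abs_div, abs_of_pos hn0]
    _ ≤ 1 / n * (2 / (x / n)) := by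
        gcongr
        · exact_mod_cast abs_moebius_le_one
        · exact abs_log_sub_harmonic_floor_add_eulerMascheroniConstant_le hxn
    _ = 2 / x := by field_simp

theorem moebius_div_log_sum_bounded :
    ∃ C : ℝ, ∀ x : ℝ, 1 ≤ x →
      |∑ n ∈ Finset.Icc 1 ⌊x⌋₊, (moebius n : ℝ) / n * Real.log (x / n)| ≤ C := by
  refine ⟨5, fun x hx => ?_⟩
  have hN : 1 ≤ ⌊x⌋₊ := Nat.one_le_floor_iff x |>.mpr hx
  set γ := eulerMascheroniConstant
  have hγ : |γ| ≤ 1 := abs_le.mpr ⟨by linarith [one_half_lt_eulerMascheroniConstant],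
    by linarith [eulerMascheroniConstant_lt_two_thirds]⟩
  have hsplit : ∀ n ∈ Icc 1 ⌊x⌋₊, (μ n : ℝ) / n * Real.log (x / n) =
      μ n / n * harmonic (⌊x⌋₊ / n) - γ * (μ n / n) +
        μ n / n * (Real.log (x / n) - harmonic ⌊x / n⌋₊ + γ) := fun n _ => by
    rw [Nat.floor_div_natCast]; ring
  rw [sum_congr rfl hsplit, sum_add_distrib, sum_sub_distrib, ← mul_sum,
    sum_moebius_div_mul_harmonic_div hN]
  calc _ ≤ |1 - γ * ∑ n ∈ Icc 1 ⌊x⌋₊, (μ n : ℝ) / n| +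
        |∑ n ∈ Icc 1 ⌊x⌋₊, (μ n : ℝ) / n * (Real.log (x / n) - harmonic ⌊x / n⌋₊ + γ)| :=
        abs_add_le _ _
    _ ≤ 1 + |γ| * |∑ n ∈ Icc 1 ⌊x⌋₊, (μ n : ℝ) / n| + 2 := by
        rw [← abs_mul]
        gcongr
        · exact (abs_sub _ _).trans (by rw [abs_one])
        · exact abs_sum_moebius_div_mul_harmonic_error_le hx
    _ ≤ 1 + 1 * 2 + 2 := by gcongr; exact abs_sum_moebius_div_le_two hN
    _ = 5 := by norm_num
end

section
/- As x → ∞, Σ_{n ≤ x} (μ(n)/n)·log²(x/n) = 2·log x + O(1), i.e. the difference Σ_{n ≤ x} (μ(n)/n)·log²(x/n) − 2·log x is bounded for x ≥ 1; the sum runs over positive integers n ≤ x. -/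
/-!
Write `S_k(x) = ∑_{n ≤ x} μ(n)/n · log^k (x/n)`. Möbius inversion gives, for every `g`,
`∑_{n ≤ x} μ(n) ∑_{m ≤ x/n} g(nm) = g(1)`; for `g(k) = 1, 1/k, log(x/k)/k` this says that
`∑_{n ≤ x} μ(n)/n · G(x/n)` equals `1/x`, `1`, `log x` for `G(y) = ⌊y⌋/y`, `∑_{m ≤ y} 1/m` and
`∑_{m ≤ y} log(y/m)/m` respectively. Each of these `G` is a quadratic polynomial in `log y` up to
an error `O((1 + log y)/y)`, and such errors add up to `O(1)` against `μ(n)/n` because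
`∑_{n ≤ x} log(x/n) ≤ x` (Stirling's bound `N! ≥ (N/e)^N`). This gives in turn `S_0 = O(1)`,
`S_1 + γ S_0 = 1 + O(1)` and `S_2/2 + γ S_1 + c S_0 = log x + O(1)`, hence `S_2 = 2 log x + O(1)`.
The constant `c` comes from `∑_{m ≤ y} log m/m = log² y/2 + c' + O((1 + log y)/y)`: the increments
`log m/m - (log²(m+1) - log² m)/2` are dominated by the decrease of `(2 + log m)/m`.
-/

open Real Finset
open ArithmeticFunction hiding log

local notation "γ" => eulerMascheroniConstant

theorem natCast_pos_of_mem_Icc_one {n N : ℕ} (hn : n ∈ Icc 1 N) : (0 : ℝ) < n := by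
  exact_mod_cast (mem_Icc.1 hn).1

theorem inv_add_one_le_log_add_one_sub_log {t : ℝ} (ht : 0 < t) :
    (t + 1)⁻¹ ≤ log (t + 1) - log t := by
  have h := one_sub_inv_le_log_of_pos (x := (t + 1) / t) (by positivity)
  rw [log_div (by positivity) ht.ne', inv_div] at h
  calc (t + 1)⁻¹ = 1 - t / (t + 1) := by field_simp; ring
    _ ≤ _ := h

theorem log_add_one_sub_log_le_inv {t : ℝ} (ht : 0 < t) : log (t + 1) - log t ≤ t⁻¹ := by
  have h := log_le_sub_one_of_pos (x := (t + 1) / t) (by positivity)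
  rw [log_div (by positivity) ht.ne'] at h
  calc _ ≤ (t + 1) / t - 1 := h
    _ = t⁻¹ := by field_simp; ring

theorem abs_log_div_sub_log_sq_sub_le {t : ℝ} (ht : 1 ≤ t) :
    |log t / t - (log (t + 1) ^ 2 - log t ^ 2) / 2| ≤
      (2 + log t) / t - (2 + log (t + 1)) / (t + 1) := by
  have ht0 : 0 < t := by linarith
  have hpq : t⁻¹ * (t + 1)⁻¹ = t⁻¹ - (t + 1)⁻¹ := by field_simp; ring
  have hp2 : t⁻¹ ^ 2 ≤ 2 * (t⁻¹ - (t + 1)⁻¹) := by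
    rw [← hpq]; field_simp; linarith
  have hqδ := inv_add_one_le_log_add_one_sub_log ht0
  have hδp := log_add_one_sub_log_le_inv ht0
  have hv : 0 ≤ log t := log_nonneg ht
  have hq : 0 ≤ (t + 1)⁻¹ := by positivity
  rw [show log (t + 1) = log t + (log (t + 1) - log t) by ring]
  set δ := log (t + 1) - log t
  set v := log t
  set p := t⁻¹
  set q := (t + 1)⁻¹
  have hlhs : v / t - ((v + δ) ^ 2 - v ^ 2) / 2 = v * (p - δ) - δ ^ 2 / 2 := by
    simp only [div_eq_mul_inv, p]; ring
  have hrhs : (2 + v) / t - (2 + (v + δ)) / (t + 1) = (2 + v) * (p - q) - δ * q := by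
    simp only [div_eq_mul_inv, p, q]; ring
  rw [hlhs, hrhs, abs_le]
  constructor <;> nlinarith [mul_le_mul_of_nonneg_left hδp hv, mul_le_mul_of_nonneg_left hqδ hv,
    mul_le_mul_of_nonneg_right hδp hq, mul_le_mul hδp hδp (hq.trans hqδ) (hq.trans (hqδ.trans hδp))]

theorem log_floor_le_log {y : ℝ} (hy : 1 ≤ y) : log ⌊y⌋₊ ≤ log y :=
  log_le_log (by exact_mod_cast Nat.floor_pos.2 hy) (Nat.floor_le (by linarith))

theorem log_le_log_floor_add_one {y : ℝ} (hy : 1 ≤ y) : log y ≤ log (⌊y⌋₊ + 1) :=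
  log_le_log (by linarith) (Nat.lt_floor_add_one y).le

theorem log_floor_add_one_sub_log_floor_le {y : ℝ} (hy : 1 ≤ y) :
    log (⌊y⌋₊ + 1) - log ⌊y⌋₊ ≤ 2 / y := by
  have hN : (1 : ℝ) ≤ ⌊y⌋₊ := by exact_mod_cast Nat.floor_pos.2 hy
  refine (log_add_one_sub_log_le_inv (by linarith)).trans ?_
  rw [inv_eq_one_div, div_le_div_iff₀ (by linarith) (by linarith)]
  linarith [Nat.lt_floor_add_one y]

theorem abs_floor_div_sub_one_le {y : ℝ} (hy : 1 ≤ y) : |⌊y⌋₊ / y - 1| ≤ 1 / y := by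
  have hy0 : 0 < y := by linarith
  rw [abs_sub_comm, abs_of_nonneg (by rw [sub_nonneg, div_le_one hy0]; exact Nat.floor_le hy0.le),
    one_sub_div hy0.ne']
  gcongr
  linarith [Nat.lt_floor_add_one y]

theorem sum_log_natCast_Icc_eq_log_factorial (N : ℕ) :
    ∑ n ∈ Icc 1 N, log n = log N.factorial := by
  rw [← log_prod fun n hn => (natCast_pos_of_mem_Icc_one hn).ne', ← Nat.cast_prod,
    ← Ico_add_one_right_eq_Icc, prod_Ico_id_eq_factorial]

theorem mul_log_sub_le_log_factorial (N : ℕ) : N * log N - N ≤ log N.factorial := by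
  rcases N.eq_zero_or_pos with rfl | hN
  · simp
  have h := log_le_log (by positivity) (pow_div_factorial_le_exp (N : ℝ) N.cast_nonneg N)
  rw [log_exp, log_div (by positivity) (by positivity), log_pow] at h
  linarith

theorem sum_log_div_natCast_le {x : ℝ} (hx : 0 ≤ x) : ∑ n ∈ Icc 1 ⌊x⌋₊, log (x / n) ≤ x := by
  set N := ⌊x⌋₊
  rcases N.eq_zero_or_pos with hN | hN
  · simp [hN, hx]
  have hN0 : (0 : ℝ) < N := by exact_mod_cast hN
  have hx0 : 0 < x := hN0.trans_le (Nat.floor_le hx)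
  calc ∑ n ∈ Icc 1 N, log (x / n) = ∑ n ∈ Icc 1 N, (log x - log n) :=
        sum_congr rfl fun n hn => log_div hx0.ne' (natCast_pos_of_mem_Icc_one hn).ne'
    _ = N * log x - log N.factorial := by
        rw [sum_sub_distrib, sum_log_natCast_Icc_eq_log_factorial]; simp
    _ ≤ N * log x - (N * log N - N) := by linarith [mul_log_sub_le_log_factorial N]
    _ = N * (log (x / N) + 1) := by rw [log_div hx0.ne' hN0.ne']; ring
    _ ≤ N * (x / N) := by gcongr; linarith [log_le_sub_one_of_pos (div_pos hx0 hN0)]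
    _ = x := by field_simp

theorem exists_abs_sub_le_of_abs_sub_succ_le {u b : ℕ → ℝ} (hb : ∀ n, 0 ≤ b n)
    (hu : ∀ n, |u (n + 1) - u n| ≤ b n - b (n + 1)) : ∃ c, ∀ n, |u n - c| ≤ b n := by
  set d := fun n => b n - b (n + 1)
  have hd : ∀ n, 0 ≤ d n := fun n => (abs_nonneg _).trans (hu n)
  have hsum : ∀ n M, ∑ i ∈ range M, d (n + i) ≤ b n := fun n M => by
    have := sum_range_sub' (fun i => b (n + i)) M
    simp only [add_zero, ← add_assoc] at this
    linarith [hb (n + M)]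
  have hdist : ∀ n, dist (u n) (u n.succ) ≤ d n := fun n => by
    rw [Real.dist_eq, abs_sub_comm]; exact hu n
  have hsummable : Summable d := summable_of_sum_range_le hd (by simpa using hsum 0)
  obtain ⟨c, hc⟩ :=
    cauchySeq_tendsto_of_complete (cauchySeq_of_dist_le_of_summable d hdist hsummable)
  refine ⟨c, fun n => ?_⟩
  rw [← Real.dist_eq]
  exact (dist_le_tsum_of_dist_le_of_tendsto d hdist hsummable hc n).trans
    (Real.tsum_le_of_sum_range_le (fun i => hd _) (hsum n))

theorem abs_harmonic_floor_sub_le {y : ℝ} (hy : 1 ≤ y) :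
    |(harmonic ⌊y⌋₊ : ℝ) - (log y + γ)| ≤ 2 / y := by
  have hlow := eulerMascheroniSeq_lt_eulerMascheroniConstant ⌊y⌋₊
  have hupp := eulerMascheroniConstant_lt_eulerMascheroniSeq' ⌊y⌋₊
  rw [eulerMascheroniSeq] at hlow
  rw [eulerMascheroniSeq', if_neg (Nat.floor_pos.2 hy).ne'] at hupp
  have := log_floor_add_one_sub_log_floor_le hy
  rw [abs_le]
  constructor <;> linarith [log_floor_le_log hy, log_le_log_floor_add_one hy]

theorem exists_abs_sum_log_div_sub_le :
    ∃ c, ∀ y : ℝ, 1 ≤ y →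
      |∑ m ∈ Icc 1 ⌊y⌋₊, log m / m - (log y ^ 2 / 2 + c)| ≤ 6 * (1 + log y) / y := by
  obtain ⟨c, hc⟩ := exists_abs_sub_le_of_abs_sub_succ_le
    (u := fun N => ∑ m ∈ Icc 1 N, log m / m - log (N + 1) ^ 2 / 2)
    (b := fun N => (2 + log (N + 1)) / (N + 1))
    (fun N => by
      have := log_nonneg (by linarith [N.cast_nonneg (α := ℝ)] : (1 : ℝ) ≤ N + 1)
      positivity)
    (fun N => by
      rw [sum_Icc_succ_top (by omega)]
      convert abs_log_div_sub_log_sq_sub_le (t := N + 1) (by linarith [N.cast_nonneg (α := ℝ)])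
        using 2 <;> push_cast <;> ring)
  refine ⟨c, fun y hy => ?_⟩
  have hy0 : 0 < y := by linarith
  set N := ⌊y⌋₊
  set l := log y
  set L := log (N + 1)
  have hl : 0 ≤ l := log_nonneg hy
  have hlL : l ≤ L := log_le_log_floor_add_one hy
  have hLl : L - l ≤ 2 / y := by
    linarith [log_floor_add_one_sub_log_floor_le hy, log_floor_le_log hy]
  have hy2 : 2 / y ≤ 2 := by rw [div_le_iff₀ hy0]; linarith
  have hsq : (L ^ 2 - l ^ 2) / 2 ≤ 2 * (1 + l) / y :=
    calc (L ^ 2 - l ^ 2) / 2 = (L - l) * (L + l) / 2 := by ring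
      _ ≤ (2 / y) * (2 * l + 2) / 2 := by
        have := mul_le_mul hLl (show L + l ≤ 2 * l + 2 by linarith) (by linarith) (by positivity)
        linarith
      _ = 2 * (1 + l) / y := by ring
  have hb : (2 + L) / (N + 1) ≤ (4 + l) / y :=
    div_le_div₀ (by linarith) (by linarith) hy0 (Nat.lt_floor_add_one y).le
  rw [show ∑ m ∈ Icc 1 N, log m / m - (l ^ 2 / 2 + c) =
      (∑ m ∈ Icc 1 N, log m / m - L ^ 2 / 2 - c) + (L ^ 2 - l ^ 2) / 2 by ring]
  refine (abs_add_le _ _).trans ?_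
  rw [abs_of_nonneg (by nlinarith : 0 ≤ (L ^ 2 - l ^ 2) / 2)]
  calc _ ≤ (4 + l) / y + 2 * (1 + l) / y := add_le_add ((hc N).trans hb) hsq
    _ ≤ 6 * (1 + l) / y := by rw [← add_div]; gcongr; linarith

theorem exists_abs_sum_log_div_div_sub_le :
    ∃ c, ∀ y : ℝ, 1 ≤ y → |∑ m ∈ Icc 1 ⌊y⌋₊, log (y / m) / m -
      (log y ^ 2 / 2 + γ * log y + c)| ≤ 8 * (1 + log y) / y := by
  obtain ⟨c, hc⟩ := exists_abs_sum_log_div_sub_le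
  refine ⟨-c, fun y hy => ?_⟩
  have hl : 0 ≤ log y := log_nonneg hy
  have hsplit : ∑ m ∈ Icc 1 ⌊y⌋₊, log (y / m) / m =
      log y * harmonic ⌊y⌋₊ - ∑ m ∈ Icc 1 ⌊y⌋₊, log m / m := by
    rw [harmonic_eq_sum_Icc]
    push_cast
    rw [mul_sum, ← sum_sub_distrib]
    refine sum_congr rfl fun m hm => ?_
    rw [log_div (by linarith) (natCast_pos_of_mem_Icc_one hm).ne']
    ring
  rw [hsplit, show ∀ H S : ℝ, log y * H - S - (log y ^ 2 / 2 + γ * log y + -c) =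
      log y * (H - (log y + γ)) - (S - (log y ^ 2 / 2 + c)) by intros; ring]
  refine (abs_sub _ _).trans ?_
  rw [abs_mul, abs_of_nonneg hl]
  calc _ ≤ log y * (2 / y) + 6 * (1 + log y) / y :=
        add_le_add (mul_le_mul_of_nonneg_left (abs_harmonic_floor_sub_le hy) hl) (hc y hy)
    _ ≤ 8 * (1 + log y) / y := by
        rw [mul_div_assoc', ← add_div]; gcongr; linarith

theorem sum_Icc_sum_Icc_div_eq_sum_divisorsAntidiagonal {M : Type*} [AddCommMonoid M]
    (F : ℕ → ℕ → M) (N : ℕ) :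
    ∑ n ∈ Icc 1 N, ∑ m ∈ Icc 1 (N / n), F n m =
      ∑ k ∈ Icc 1 N, ∑ p ∈ k.divisorsAntidiagonal, F p.1 p.2 := by
  rw [sum_sigma', sum_sigma']
  refine sum_nbij' (fun p => ⟨p.1 * p.2, (p.1, p.2)⟩) (fun p => ⟨p.2.1, p.2.2⟩) ?_ ?_ ?_ ?_ ?_
  · rintro ⟨n, m⟩ h
    simp only [mem_sigma, mem_Icc, Nat.mem_divisorsAntidiagonal] at h ⊢
    obtain ⟨⟨hn, -⟩, hm, hmN⟩ := h
    rw [Nat.le_div_iff_mul_le hn, mul_comm] at hmN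
    have : 1 ≤ n * m := Nat.one_le_iff_ne_zero.2 (by positivity)
    exact ⟨⟨this, hmN⟩, trivial, by omega⟩
  · rintro ⟨k, n, m⟩ h
    simp only [mem_sigma, mem_Icc, Nat.mem_divisorsAntidiagonal] at h ⊢
    obtain ⟨⟨hk, hkN⟩, rfl, -⟩ := h
    have hn : 0 < n := Nat.pos_of_mul_pos_right hk
    have hm : 0 < m := Nat.pos_of_mul_pos_left hk
    rw [Nat.le_div_iff_mul_le hn, mul_comm]
    exact ⟨⟨hn, (Nat.le_mul_of_pos_right n hm).trans hkN⟩, hm, hkN⟩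
  · intro _ _; rfl
  · rintro ⟨k, n, m⟩ h
    simp only [mem_sigma, Nat.mem_divisorsAntidiagonal] at h
    simp [h.2.1]
  · intro _ _; rfl

theorem sum_moebius_mul_sum_Icc_div {R : Type*} [Ring R] (g : ℕ → R) {N : ℕ} (hN : 1 ≤ N) :
    ∑ n ∈ Icc 1 N, (moebius n : R) * ∑ m ∈ Icc 1 (N / n), g (n * m) = g 1 := by
  simp_rw [mul_sum]
  rw [sum_Icc_sum_Icc_div_eq_sum_divisorsAntidiagonal (fun n m => (moebius n : R) * g (n * m))]
  have hk : ∀ k ∈ Icc 1 N, ∑ p ∈ k.divisorsAntidiagonal, (moebius p.1 : R) * g (p.1 * p.2) =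
      ((moebius : ArithmeticFunction R) * zeta) k * g k := by
    intro k hk
    simp only [coe_mul_zeta_apply, sum_mul, intCoe_apply]
    rw [← Nat.sum_divisorsAntidiagonal (fun a _ => (moebius a : R) * g k)]
    refine sum_congr rfl fun p hp => ?_
    rw [(Nat.mem_divisorsAntidiagonal.1 hp).1]
  rw [sum_congr rfl hk, sum_eq_single_of_mem 1 (by simp [hN])]
  · simp
  · intro k _ hk1
    simp [one_apply_ne hk1]

theorem sum_moebius_mul_sum_Icc_floor_div (g : ℕ → ℝ) {x : ℝ} (hx : 1 ≤ x) :
    ∑ n ∈ Icc 1 ⌊x⌋₊, (moebius n : ℝ) * ∑ m ∈ Icc 1 ⌊x / n⌋₊, g (n * m) = g 1 := by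
  simp_rw [Nat.floor_div_natCast]
  exact sum_moebius_mul_sum_Icc_div g (Nat.one_le_floor_iff x |>.2 hx)

theorem sum_moebius_div_mul_floor_div_div {x : ℝ} (hx : 1 ≤ x) :
    ∑ n ∈ Icc 1 ⌊x⌋₊, (moebius n : ℝ) / n * (⌊x / n⌋₊ / (x / n)) = x⁻¹ := by
  have h := sum_moebius_mul_sum_Icc_floor_div (fun _ => 1) hx
  simp only [sum_const, Nat.card_Icc, add_tsub_cancel_right, nsmul_eq_mul, mul_one] at h
  rw [← mul_one x⁻¹, ← h, mul_sum]
  refine sum_congr rfl fun n hn => ?_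
  have := (natCast_pos_of_mem_Icc_one hn).ne'
  field_simp

theorem sum_moebius_div_mul_harmonic_floor_div {x : ℝ} (hx : 1 ≤ x) :
    ∑ n ∈ Icc 1 ⌊x⌋₊, (moebius n : ℝ) / n * harmonic ⌊x / n⌋₊ = 1 := by
  have h := sum_moebius_mul_sum_Icc_floor_div (fun k => (k : ℝ)⁻¹) hx
  simp only [Nat.cast_one, inv_one] at h
  rw [← h]
  refine sum_congr rfl fun n _ => ?_
  rw [harmonic_eq_sum_Icc]
  push_cast
  rw [mul_sum, mul_sum]
  refine sum_congr rfl fun m _ => ?_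
  rw [mul_inv]; ring

theorem sum_moebius_div_mul_sum_log_div_div {x : ℝ} (hx : 1 ≤ x) :
    ∑ n ∈ Icc 1 ⌊x⌋₊, (moebius n : ℝ) / n * ∑ m ∈ Icc 1 ⌊x / n⌋₊, log (x / n / m) / m =
      log x := by
  have h := sum_moebius_mul_sum_Icc_floor_div (fun k => log (x / k) / k) hx
  simp only [Nat.cast_one, div_one] at h
  rw [← h]
  refine sum_congr rfl fun n _ => ?_
  rw [mul_sum, mul_sum]
  refine sum_congr rfl fun m _ => ?_
  push_cast
  rw [div_div]; ring

theorem abs_sum_moebius_div_mul_sub_le {G P : ℝ → ℝ} {C x : ℝ}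
    (hGP : ∀ y, 1 ≤ y → |G y - P y| ≤ C * (1 + log y) / y) (hx : 0 < x) :
    |∑ n ∈ Icc 1 ⌊x⌋₊, (moebius n : ℝ) / n * G (x / n) -
      ∑ n ∈ Icc 1 ⌊x⌋₊, (moebius n : ℝ) / n * P (x / n)| ≤ 2 * C := by
  have hC : 0 ≤ C := by simpa using (abs_nonneg _).trans (hGP 1 le_rfl)
  rw [← sum_sub_distrib]
  refine (abs_sum_le_sum_abs _ _).trans ?_
  calc _ ≤ ∑ n ∈ Icc 1 ⌊x⌋₊, C / x * (1 + log (x / n)) := sum_le_sum fun n hn => by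
        have hn0 := natCast_pos_of_mem_Icc_one hn
        have hμ : |(moebius n : ℝ)| ≤ 1 := by exact_mod_cast abs_moebius_le_one
        have hxn : 1 ≤ x / n :=
          (one_le_div hn0).2 ((Nat.cast_le.2 (mem_Icc.1 hn).2).trans (Nat.floor_le hx.le))
        rw [← mul_sub, abs_mul, abs_div, abs_of_pos hn0]
        calc _ ≤ 1 / n * (C * (1 + log (x / n)) / (x / n)) := by gcongr; exact hGP _ hxn
          _ = C / x * (1 + log (x / n)) := by field_simp
    _ = C / x * (⌊x⌋₊ + ∑ n ∈ Icc 1 ⌊x⌋₊, log (x / n)) := by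
        rw [← mul_sum, sum_add_distrib]; simp
    _ ≤ C / x * (x + x) := by
        gcongr
        · exact Nat.floor_le hx.le
        · exact sum_log_div_natCast_le hx.le
    _ = 2 * C := by field_simp; ring

noncomputable def moebiusLogSum (k : ℕ) (x : ℝ) : ℝ :=
  ∑ n ∈ Icc 1 ⌊x⌋₊, (moebius n : ℝ) / n * log (x / n) ^ k

theorem sum_moebius_div_mul_quadratic_log (a b c x : ℝ) :
    ∑ n ∈ Icc 1 ⌊x⌋₊, (moebius n : ℝ) / n * (a * log (x / n) ^ 2 + b * log (x / n) + c) =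
      a * moebiusLogSum 2 x + b * moebiusLogSum 1 x + c * moebiusLogSum 0 x := by
  simp only [moebiusLogSum, mul_sum, ← sum_add_distrib]
  exact sum_congr rfl fun n _ => by ring

theorem abs_moebiusLogSum_zero_le {x : ℝ} (hx : 1 ≤ x) : |moebiusLogSum 0 x| ≤ 3 := by
  have h := abs_sum_moebius_div_mul_sub_le (G := fun y => ⌊y⌋₊ / y)
    (P := fun y => 0 * log y ^ 2 + 0 * log y + 1) (C := 1) (fun y hy => by
      simpa using (abs_floor_div_sub_one_le hy).trans
        (div_le_div_of_nonneg_right (by linarith [log_nonneg hy]) (by linarith))) (by linarith)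
  rw [sum_moebius_div_mul_floor_div_div hx, sum_moebius_div_mul_quadratic_log] at h
  simp only [zero_mul, add_zero, one_mul, zero_add, mul_one] at h
  have hx' : |x⁻¹| ≤ 1 := by
    rw [abs_inv, abs_of_pos (by linarith)]; exact inv_le_one_of_one_le₀ hx
  calc |moebiusLogSum 0 x| = |x⁻¹ - (x⁻¹ - moebiusLogSum 0 x)| := by ring_nf
    _ ≤ 3 := (abs_sub _ _).trans (by linarith)

theorem abs_moebiusLogSum_one_le {x : ℝ} (hx : 1 ≤ x) : |moebiusLogSum 1 x| ≤ 5 + 3 * |γ| := by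
  have h := abs_sum_moebius_div_mul_sub_le (G := fun y => harmonic ⌊y⌋₊)
    (P := fun y => 0 * log y ^ 2 + 1 * log y + γ) (C := 2) (fun y hy => by
      simpa using (abs_harmonic_floor_sub_le hy).trans
        (div_le_div_of_nonneg_right (by linarith [log_nonneg hy]) (by linarith))) (by linarith)
  rw [sum_moebius_div_mul_harmonic_floor_div hx, sum_moebius_div_mul_quadratic_log] at h
  set S₀ := moebiusLogSum 0 x
  set S₁ := moebiusLogSum 1 x
  calc |S₁| = |1 - (1 - (S₁ + γ * S₀)) - γ * S₀| := by ring_nf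
    _ ≤ 1 + 4 + |γ| * 3 := by
        refine (abs_sub _ _).trans (add_le_add ((abs_sub _ _).trans ?_) ?_)
        · simp only [zero_mul, one_mul, zero_add, abs_one] at h ⊢; linarith
        · rw [abs_mul]; gcongr; exact abs_moebiusLogSum_zero_le hx
    _ = 5 + 3 * |γ| := by ring

theorem exists_abs_log_sub_moebiusLogSum_two_le :
    ∃ c, ∀ x : ℝ, 1 ≤ x →
      |log x - (moebiusLogSum 2 x / 2 + γ * moebiusLogSum 1 x + c * moebiusLogSum 0 x)| ≤ 16 := by
  obtain ⟨c, hc⟩ := exists_abs_sum_log_div_div_sub_le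
  refine ⟨c, fun x hx => ?_⟩
  have h := abs_sum_moebius_div_mul_sub_le (G := fun y => ∑ m ∈ Icc 1 ⌊y⌋₊, log (y / m) / m)
    (P := fun y => 2⁻¹ * log y ^ 2 + γ * log y + c) (C := 8) (fun y hy => by
      simpa [div_eq_inv_mul] using hc y hy) (by linarith)
  rw [sum_moebius_div_mul_sum_log_div_div hx, sum_moebius_div_mul_quadratic_log] at h
  rw [div_eq_inv_mul]
  linarith

theorem moebius_div_log_sq_sum :
    ∃ C : ℝ, ∀ x : ℝ, 1 ≤ x →
      |(∑ n ∈ Finset.Icc 1 ⌊x⌋₊, (moebius n : ℝ) / n * (Real.log (x / n)) ^ 2)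
        - 2 * Real.log x| ≤ C := by
  obtain ⟨c, hc⟩ := exists_abs_log_sub_moebiusLogSum_two_le
  refine ⟨32 + 2 * |γ| * (5 + 3 * |γ|) + 6 * |c|, fun x hx => ?_⟩
  have h2 := hc x hx
  have h1 := abs_moebiusLogSum_one_le hx
  have h0 := abs_moebiusLogSum_zero_le hx
  change |moebiusLogSum 2 x - 2 * log x| ≤ _
  generalize moebiusLogSum 0 x = S₀ at *
  generalize moebiusLogSum 1 x = S₁ at *
  generalize moebiusLogSum 2 x = S₂ at *
  calc _ = |-2 * (log x - (S₂ / 2 + γ * S₁ + c * S₀)) - 2 * γ * S₁ - 2 * c * S₀| := by ring_nf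
    _ ≤ 2 * 16 + 2 * |γ| * (5 + 3 * |γ|) + 2 * |c| * 3 := by
        refine (abs_sub _ _).trans (add_le_add ((abs_sub _ _).trans (add_le_add ?_ ?_)) ?_) <;>
          simp only [abs_mul, abs_neg, abs_two] <;> gcongr
    _ = _ := by ring
end

section
/- Let s : [0,∞) → ℝ be a function and M, M' ≥ 0 constants such that (1) e^{t'}·s(t') − e^{t}·s(t) ≥ −M·(e^{t'} − e^{t}) for all t' ≥ t ≥ 0, and (2) |∫_0^x s(t) dt| ≤ M' for all x ≥ 0. If S := limsup_{t→∞} |s(t)| satisfies S > 0, then there exist real numbers S₁ with 0 < S₁ < S and e, h > 0 such that for every x ≥ 0 the set E_{x,h,S₁} = { t ∈ [x, x+h] : |s(t)| ≤ S₁ } has Lebesgue measure at least e. -/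
/-!
Replace `s` by an extension `σ` to `ℝ` for which `t ↦ e^t (σ t + M)` is monotone everywhere;
this makes `σ` measurable and locally integrable. Fix a window `[x, x + h]` and `S₁ > 0`.
If `σ ≥ 0` somewhere in the window and `σ < -S₁` later in it, monotonicity says `σ` can fall
from `0` to `-S₁` no faster than at rate about `M`, so just after the last point where `σ ≥ 0`
it stays in `[-S₁, 0)` for a time `S₁ / (M + 1)`. Otherwise some `c` splits the window into a
part where `σ < 0` and a part where `σ ≥ -S₁`; since integrals of `σ` over windows are bounded
by `K = 2 M'`, the set where `|σ| ≤ S₁` then has measure at least `1` once `h = 2K / S₁ + 3`.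
Finally take `S₁ = S / 2`.
-/

open Filter Real MeasureTheory Set

section MonotoneExpMul

variable {σ : ℝ → ℝ} {M : ℝ}

lemma exp_sub_mul_add_sub_le_of_monotone (hmono : Monotone fun t => exp t * (σ t + M)) {u t : ℝ}
    (hut : u ≤ t) : exp (u - t) * (σ u + M) - M ≤ σ t := by
  have key : exp (u - t) * (σ u + M) ≤ exp (-t) * (exp t * (σ t + M)) := by
    rw [sub_eq_neg_add, exp_add, mul_assoc]
    exact mul_le_mul_of_nonneg_left (hmono hut) (exp_pos _).le
  rw [← mul_assoc, ← exp_add, neg_add_cancel, exp_zero, one_mul] at key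
  linarith

lemma eq_exp_neg_mul_exp_mul (t : ℝ) : σ t = exp (-t) * (exp t * (σ t + M)) - M := by
  rw [← mul_assoc, ← exp_add, neg_add_cancel, exp_zero, one_mul, add_sub_cancel_right]

lemma measurable_of_monotone_exp_mul (hmono : Monotone fun t => exp t * (σ t + M)) :
    Measurable σ := by
  rw [funext (eq_exp_neg_mul_exp_mul (σ := σ) (M := M))]
  exact ((measurable_exp.comp measurable_neg).mul hmono.measurable).sub_const M

lemma intervalIntegrable_of_monotone_exp_mul (hmono : Monotone fun t => exp t * (σ t + M))
    (a b : ℝ) : IntervalIntegrable σ volume a b := by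
  rw [funext (eq_exp_neg_mul_exp_mul (σ := σ) (M := M))]
  exact ((hmono.monotoneOn _).intervalIntegrable.continuousOn_mul
    (continuous_exp.comp continuous_neg).continuousOn).sub intervalIntegrable_const

lemma exists_Ioo_abs_le_of_descent (hM : 0 ≤ M) (hmono : Monotone fun t => exp t * (σ t + M))
    {S₁ t₁ t₂ : ℝ} (hS₁ : 0 < S₁) (ht : t₁ ≤ t₂) (h₁ : 0 ≤ σ t₁) (h₂ : σ t₂ < -S₁) :
    ∃ v, t₁ ≤ v ∧ v + S₁ / (M + 1) ≤ t₂ ∧ Ioo v (v + S₁ / (M + 1)) ⊆ {t | |σ t| ≤ S₁} := by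
  set τ := S₁ / (M + 1)
  have hτM : τ * M ≤ S₁ := by
    rw [div_mul_eq_mul_div, div_le_iff₀ (by linarith)]
    nlinarith
  set A := {u ∈ Icc t₁ t₂ | 0 ≤ σ u}
  have ht₁A : t₁ ∈ A := ⟨left_mem_Icc.2 ht, h₁⟩
  have hA : BddAbove A := ⟨t₂, fun u hu => hu.1.2⟩
  set v := sSup A
  have hv₁ : t₁ ≤ v := le_csSup hA ht₁A
  have hv₂ : v ≤ t₂ := csSup_le ⟨t₁, ht₁A⟩ fun u hu => hu.1.2
  have hlow : ∀ t, v ≤ t → t < v + τ → -S₁ ≤ σ t := by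
    intro t hvt htv
    obtain ⟨u, hu, htu⟩ := exists_lt_of_lt_csSup ⟨t₁, ht₁A⟩ (by linarith : t - τ < v)
    have hut : u ≤ t := (le_csSup hA hu).trans hvt
    have hexp := add_one_le_exp (u - t)
    have := exp_sub_mul_add_sub_le_of_monotone hmono hut
    -- `σ t ≥ e^(u - t) (σ u + M) - M ≥ e^(u - t) M - M ≥ (u - t) M ≥ -τ M`
    nlinarith [mul_nonneg (exp_pos (u - t)).le hu.2, mul_nonneg (sub_nonneg.2 hexp) hM,
      mul_nonneg (by linarith : 0 ≤ u - t + τ) hM]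
  have hvτ : v + τ ≤ t₂ := by
    by_contra! h
    linarith [hlow t₂ hv₂ h]
  refine ⟨v, hv₁, hvτ, fun t ht => ?_⟩
  have hneg : σ t < 0 := by
    by_contra! h
    have : t ≤ v := le_csSup hA ⟨⟨by linarith [ht.1], by linarith [ht.2]⟩, h⟩
    linarith [ht.1]
  exact abs_le.2 ⟨hlow t ht.1.le ht.2, by linarith⟩

end MonotoneExpMul

lemma exists_separating_point {a b : ℝ} (hab : a ≤ b) {N P : Set ℝ} (hN : N ⊆ Icc a b)
    (hP : P ⊆ Icc a b) (hNP : ∀ n ∈ N, ∀ p ∈ P, n ≤ p) :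
    ∃ c ∈ Icc a b, (∀ n ∈ N, n ≤ c) ∧ ∀ p ∈ P, c ≤ p := by
  have hbdd : BddAbove (insert a N) := ⟨b, forall_mem_insert.2 ⟨hab, fun n hn => (hN hn).2⟩⟩
  refine ⟨sSup (insert a N), ⟨le_csSup hbdd (mem_insert _ _),
    csSup_le (insert_nonempty _ _) (forall_mem_insert.2 ⟨hab, fun n hn => (hN hn).2⟩)⟩,
    fun n hn => le_csSup hbdd (mem_insert_of_mem _ hn), fun p hp => ?_⟩
  exact csSup_le (insert_nonempty _ _) (forall_mem_insert.2 ⟨(hP hp).1, fun n hn => hNP n hn p hp⟩)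

lemma integral_le_of_le_add_indicator {f : ℝ → ℝ} {a b α β : ℝ} {G : Set ℝ} (hab : a ≤ b)
    (hG : MeasurableSet G) (hf : IntervalIntegrable f volume a b)
    (hle : ∀ t ∈ Ioo a b, f t ≤ α + G.indicator (fun _ => β) t) :
    ∫ t in a..b, f t ≤ α * (b - a) + β * volume.real (G ∩ Ioo a b) := by
  rw [intervalIntegral.integral_of_le hab, integral_Ioc_eq_integral_Ioo]
  calc ∫ t in Ioo a b, f t ≤ ∫ t in Ioo a b, (α + G.indicator (fun _ => β) t) :=
        setIntegral_mono_on (hf.1.mono_set Ioo_subset_Ioc_self)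
          ((integrable_const α).add ((integrable_const β).indicator hG)) measurableSet_Ioo hle
    _ = α * (b - a) + β * volume.real (G ∩ Ioo a b) := by
        rw [integral_add (integrable_const α) ((integrable_const β).indicator hG),
          integral_indicator_const _ hG, setIntegral_const, measureReal_restrict_apply hG]
        simp [hab]
        ring

lemma mul_le_volume_real_of_sign_change {σ : ℝ → ℝ} {K S₁ x h c : ℝ} (hS₁ : 0 < S₁)
    (hσ : Measurable σ) (hint : ∀ a b, IntervalIntegrable σ volume a b)
    (hK : ∀ a b, 0 ≤ a → a ≤ b → |∫ t in a..b, σ t| ≤ K) (hx : 0 ≤ x)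
    (hc : c ∈ Icc x (x + h)) (hneg : ∀ t ∈ Ioo x c, σ t < 0)
    (hpos : ∀ t ∈ Ioo c (x + h), -S₁ ≤ σ t) :
    S₁ * h ≤ 2 * K + 3 * S₁ * volume.real {t ∈ Icc x (x + h) | |σ t| ≤ S₁} := by
  set G := {t | |σ t| ≤ S₁}
  have hG : MeasurableSet G := measurableSet_le hσ.abs measurable_const
  have hE : ∀ {a b}, x ≤ a → b ≤ x + h →
      volume.real (G ∩ Ioo a b) ≤ volume.real {t ∈ Icc x (x + h) | |σ t| ≤ S₁} :=
    fun hxa hbh => measureReal_mono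
      (fun t ht => ⟨⟨hxa.trans ht.2.1.le, ht.2.2.le.trans hbh⟩, ht.1⟩)
      ((measure_mono (sep_subset _ _)).trans_lt (by simp)).ne
  have hleft : ∫ t in x..c, σ t ≤ -S₁ * (c - x) + S₁ * volume.real (G ∩ Ioo x c) := by
    refine integral_le_of_le_add_indicator hc.1 hG (hint x c) fun t ht => ?_
    by_cases htG : t ∈ G
    · rw [indicator_of_mem htG]
      linarith [hneg t ht]
    · rw [indicator_of_notMem htG]
      have := hneg t ht
      simp only [G, mem_ofPred_eq, not_le, abs_of_neg this] at htG
      linarith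
  have hright : ∫ t in c..(x + h), -σ t
      ≤ -S₁ * (x + h - c) + 2 * S₁ * volume.real (G ∩ Ioo c (x + h)) := by
    refine integral_le_of_le_add_indicator hc.2 hG (hint c (x + h)).neg fun t ht => ?_
    by_cases htG : t ∈ G
    · rw [indicator_of_mem htG]
      linarith [(abs_le.1 (show |σ t| ≤ S₁ from htG)).1]
    · rw [indicator_of_notMem htG]
      have := hpos t ht
      simp only [G, mem_ofPred_eq, not_le, lt_abs] at htG
      rcases htG with htG | htG <;> linarith
  rw [intervalIntegral.integral_neg] at hright
  have hKl := neg_le_of_abs_le (hK x c hx hc.1)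
  have hKr := le_of_abs_le (hK c (x + h) (hx.trans hc.1) hc.2)
  have hml := mul_le_mul_of_nonneg_left (hE le_rfl hc.2) hS₁.le
  have hmr := mul_le_mul_of_nonneg_left (hE hc.1 le_rfl) hS₁.le
  linarith

lemma ofReal_min_le_volume_window {σ : ℝ → ℝ} {M K S₁ x : ℝ} (hM : 0 ≤ M)
    (hmono : Monotone fun t => exp t * (σ t + M))
    (hK : ∀ a b, 0 ≤ a → a ≤ b → |∫ t in a..b, σ t| ≤ K) (hS₁ : 0 < S₁) (hx : 0 ≤ x) :
    ENNReal.ofReal (min (S₁ / (M + 1)) 1)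
      ≤ volume {t ∈ Icc x (x + (2 * K / S₁ + 3)) | |σ t| ≤ S₁} := by
  set h := 2 * K / S₁ + 3
  have hK₀ : 0 ≤ K := by simpa using hK 0 0 le_rfl le_rfl
  set W := Icc x (x + h)
  set E := {t ∈ W | |σ t| ≤ S₁}
  by_cases hdescent : ∃ t₁ ∈ W, ∃ t₂ ∈ W, t₁ ≤ t₂ ∧ 0 ≤ σ t₁ ∧ σ t₂ < -S₁
  · obtain ⟨t₁, ht₁, t₂, ht₂, ht, h₁, h₂⟩ := hdescent
    obtain ⟨v, hv₁, hv₂, hsub⟩ := exists_Ioo_abs_le_of_descent hM hmono hS₁ ht h₁ h₂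
    calc ENNReal.ofReal (min (S₁ / (M + 1)) 1) ≤ ENNReal.ofReal (S₁ / (M + 1)) :=
          ENNReal.ofReal_le_ofReal (min_le_left _ _)
      _ = volume (Ioo v (v + S₁ / (M + 1))) := by rw [volume_Ioo, add_sub_cancel_left]
      _ ≤ volume E := measure_mono fun t ht =>
          ⟨⟨by linarith [ht.1, ht₁.1], by linarith [ht.2, ht₂.2]⟩, hsub ht⟩
  · push Not at hdescent
    have hxh : x ≤ x + h := le_add_of_nonneg_right (by positivity)
    obtain ⟨c, hc, hNc, hcP⟩ := exists_separating_point hxh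
      (sep_subset W fun t => σ t < -S₁) (sep_subset W fun t => 0 ≤ σ t)
      fun n hn p hp => by
        by_contra! hpn
        exact (hdescent p hp.1 n hn.1 hpn.le hp.2).not_gt hn.2
    have hneg : ∀ t ∈ Ioo x c, σ t < 0 := fun t ht => by
      by_contra! h₀
      exact (hcP t ⟨⟨ht.1.le, ht.2.le.trans hc.2⟩, h₀⟩).not_gt ht.2
    have hpos : ∀ t ∈ Ioo c (x + h), -S₁ ≤ σ t := fun t ht => by
      by_contra! h₀
      exact (hNc t ⟨⟨hc.1.trans ht.1.le, ht.2.le⟩, h₀⟩).not_gt ht.1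
    have hm := mul_le_volume_real_of_sign_change hS₁ (measurable_of_monotone_exp_mul hmono)
      (intervalIntegrable_of_monotone_exp_mul hmono) hK hx hc hneg hpos
    have hSh : S₁ * h = 2 * K + 3 * S₁ := by
      simp only [h]
      field_simp
    have hm₁ : 1 ≤ volume.real E := by nlinarith
    calc ENNReal.ofReal (min (S₁ / (M + 1)) 1) ≤ ENNReal.ofReal (volume.real E) :=
          ENNReal.ofReal_le_ofReal ((min_le_right _ _).trans hm₁)
      _ = volume E :=
          ofReal_measureReal ((measure_mono (sep_subset _ _)).trans_lt measure_Icc_lt_top).ne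

lemma exists_monotone_exp_mul_extension {s : ℝ → ℝ} {M : ℝ}
    (h1 : ∀ t t' : ℝ, 0 ≤ t → t ≤ t' →
      -M * (exp t' - exp t) ≤ exp t' * s t' - exp t * s t) :
    ∃ σ : ℝ → ℝ, EqOn σ s (Ici 0) ∧ Monotone fun t => exp t * (σ t + M) := by
  set g := fun t => exp (max t 0) * (s (max t 0) + M)
  have hg : ∀ t, exp t * (exp (-t) * g t - M + M) = g t := fun t => by
    rw [sub_add_cancel, ← mul_assoc, ← exp_add, add_neg_cancel, exp_zero, one_mul]
  refine ⟨fun t => exp (-t) * g t - M, fun t ht => ?_, fun a b hab => ?_⟩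
  · simp only [g, max_eq_left (mem_Ici.1 ht)]
    exact (eq_exp_neg_mul_exp_mul t).symm
  · simp only [hg, g]
    have := h1 (max a 0) (max b 0) (le_max_right a 0) (max_le_max_right 0 hab)
    linarith

lemma abs_intervalIntegral_le_two_mul {σ : ℝ → ℝ} {M' : ℝ}
    (hint : ∀ a b, IntervalIntegrable σ volume a b)
    (h2 : ∀ x : ℝ, 0 ≤ x → |∫ t in (0:ℝ)..x, σ t| ≤ M') {a b : ℝ} (ha : 0 ≤ a) (hab : a ≤ b) :
    |∫ t in a..b, σ t| ≤ 2 * M' := by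
  rw [← intervalIntegral.integral_interval_sub_left (hint 0 b) (hint 0 a)]
  linarith [abs_sub (∫ t in (0:ℝ)..b, σ t) (∫ t in (0:ℝ)..a, σ t), h2 a ha, h2 b (ha.trans hab)]

theorem measure_of_small_values_general
    (s : ℝ → ℝ) (M M' : ℝ) (hM : 0 ≤ M)
    (h1 : ∀ t t' : ℝ, 0 ≤ t → t ≤ t' →
      -M * (Real.exp t' - Real.exp t) ≤ Real.exp t' * s t' - Real.exp t * s t)
    (h2 : ∀ x : ℝ, 0 ≤ x → |∫ t in (0:ℝ)..x, s t| ≤ M')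
    (hS : 0 < limsup (fun t : ℝ => |s t|) atTop) :
    ∃ S₁ e h : ℝ, 0 < S₁ ∧ S₁ < limsup (fun t : ℝ => |s t|) atTop ∧
      0 < e ∧ 0 < h ∧
      ∀ x : ℝ, 0 ≤ x →
        ENNReal.ofReal e ≤ volume {t ∈ Set.Icc x (x + h) | |s t| ≤ S₁} := by
  obtain ⟨σ, hσs, hmono⟩ := exists_monotone_exp_mul_extension h1
  have h2σ : ∀ x : ℝ, 0 ≤ x → |∫ t in (0:ℝ)..x, σ t| ≤ M' := fun x hx => by
    rw [intervalIntegral.integral_congr fun t ht => hσs (uIcc_of_le hx ▸ ht).1]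
    exact h2 x hx
  have hK : ∀ a b, 0 ≤ a → a ≤ b → |∫ t in a..b, σ t| ≤ 2 * M' := fun _ _ =>
    abs_intervalIntegral_le_two_mul (intervalIntegrable_of_monotone_exp_mul hmono) h2σ
  have hM' : 0 ≤ M' := by simpa using h2 0 le_rfl
  set S := limsup (fun t : ℝ => |s t|) atTop
  refine ⟨S / 2, min (S / 2 / (M + 1)) 1, 2 * (2 * M') / (S / 2) + 3, half_pos hS,
    half_lt_self hS, lt_min (by positivity) one_pos, by positivity, fun x hx => ?_⟩
  rw [sep_ext_iff (q := fun t => |σ t| ≤ S / 2) |>.2 fun t ht => by rw [hσs (hx.trans ht.1)]]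
  exact ofReal_min_le_volume_window hM hmono hK (half_pos hS) hx

theorem measure_of_small_values
    (s : ℝ → ℝ) (M M' : ℝ) (hM : 0 ≤ M) (hM' : 0 ≤ M')
    (h1 : ∀ t t' : ℝ, 0 ≤ t → t ≤ t' →
      -M * (Real.exp t' - Real.exp t) ≤ Real.exp t' * s t' - Real.exp t * s t)
    (h2 : ∀ x : ℝ, 0 ≤ x → |∫ t in (0:ℝ)..x, s t| ≤ M')
    (hS : 0 < limsup (fun t : ℝ => |s t|) atTop) :
    ∃ S₁ e h : ℝ, 0 < S₁ ∧ S₁ < limsup (fun t : ℝ => |s t|) atTop ∧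
      0 < e ∧ 0 < h ∧
      ∀ x : ℝ, 0 ≤ x →
        ENNReal.ofReal e ≤ volume {t ∈ Set.Icc x (x + h) | |s t| ≤ S₁} :=
  measure_of_small_values_general s M M' hM h1 h2 hS
end

section
/- Let t₁ < t₂ be real numbers, C₁ > C₂ > 0, and let k : [t₁,t₂] → ℝ be non-decreasing with k(t₁) ≥ C₁·e^{t₁} and k(t₂) ≤ C₂·e^{t₂}. Then the set { t ∈ [t₁,t₂] : C₂·e^t ≤ k(t) ≤ C₁·e^t } has Lebesgue measure at least log(C₁/C₂). -/
/-!
Put `g t = log k(t) - t`, so that `g + id = log ∘ k` is monotone: `g` may jump up but decreases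
at rate at most one, starts at `g t₁ ≥ log C₁` and ends at `g t₂ ≤ log C₂`. For each level
`y ∈ (log C₂, log C₁]` the last time `T y` at which `g ≥ y` satisfies `g (T y) = y`, and
monotonicity of `g + id` makes `T` expanding. Hence `g` is a `1`-Lipschitz map from the image of
`T`, which lies in the set in question, onto an interval of length `log (C₁ / C₂)`.
-/

open Real MeasureTheory Set

theorem LipschitzOnWith.volume_image_le {K : NNReal} {f : ℝ → ℝ} {s : Set ℝ}
    (hf : LipschitzOnWith K f s) : volume (f '' s) ≤ K * volume s := by
  simpa only [hausdorffMeasure_real, ENNReal.rpow_one] using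
    hf.hausdorffMeasure_image_le zero_le_one

noncomputable def lastTimeAbove (g : ℝ → ℝ) (a b y : ℝ) : ℝ :=
  sSup {t ∈ Icc a b | y ≤ g t}

section LastTimeAbove

variable {g : ℝ → ℝ} {a b y y' : ℝ}

theorem lastTimeAbove_mem_Icc (hab : a ≤ b) (hy : y ≤ g a) : lastTimeAbove g a b y ∈ Icc a b :=
  ⟨le_csSup ⟨b, fun _ ht => ht.1.2⟩ ⟨left_mem_Icc.2 hab, hy⟩,
    csSup_le ⟨a, left_mem_Icc.2 hab, hy⟩ fun _ ht => ht.1.2⟩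

theorem lastTimeAbove_antitone (hab : a ≤ b) (hy' : y' ≤ g a) (hyy' : y ≤ y') :
    lastTimeAbove g a b y' ≤ lastTimeAbove g a b y :=
  csSup_le_csSup ⟨b, fun _ ht => ht.1.2⟩ ⟨a, left_mem_Icc.2 hab, hy'⟩
    fun _ ht => ⟨ht.1, hyy'.trans ht.2⟩

theorem apply_lastTimeAbove (hg : MonotoneOn (fun t => g t + t) (Icc a b)) (hab : a ≤ b)
    (hya : y ≤ g a) (hyb : g b < y) :
    g (lastTimeAbove g a b y) = y := by
  set E := {t ∈ Icc a b | y ≤ g t}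
  set T := lastTimeAbove g a b y
  have hT : T ∈ Icc a b := lastTimeAbove_mem_Icc hab hya
  have hE : BddAbove E := ⟨b, fun _ ht => ht.1.2⟩
  have le_T {t : ℝ} (ht : t ∈ E) : t ≤ T := le_csSup hE ht
  have drop_le {s t : ℝ} (hs : s ∈ Icc a b) (ht : t ∈ Icc a b) (hst : s ≤ t) :
      g s - (t - s) ≤ g t := by
    have := hg hs ht hst
    linarith
  have le_g_T : y ≤ g T := by
    by_contra! hlt
    obtain ⟨t, htE, hTt⟩ := exists_lt_of_lt_csSup (s := E) ⟨a, left_mem_Icc.2 hab, hya⟩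
      (show T - (y - g T) < T by linarith)
    linarith [drop_le htE.1 hT (le_T htE), htE.2]
  have hTb : T < b := hT.2.lt_of_ne fun h => by rw [h] at le_g_T; linarith
  refine le_antisymm ?_ le_g_T
  by_contra! hlt
  -- Otherwise `g ≥ y` still holds a little after `T`.
  set t := min b (T + (g T - y))
  have hTt : T < t := lt_min hTb (by linarith)
  have ht : t ∈ Icc a b := ⟨hT.1.trans hTt.le, min_le_left _ _⟩
  have hyt : y ≤ g t := by linarith [drop_le hT ht hTt.le, min_le_right b (T + (g T - y))]
  linarith [le_T ⟨ht, hyt⟩]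

theorem lipschitzOnWith_one_image_lastTimeAbove (hg : MonotoneOn (fun t => g t + t) (Icc a b))
    (hab : a ≤ b) : LipschitzOnWith 1 g (lastTimeAbove g a b '' Ioc (g b) (g a)) := by
  have expanding {y y' : ℝ} (hy : y ∈ Ioc (g b) (g a)) (hy' : y' ∈ Ioc (g b) (g a))
      (hyy' : y ≤ y') : dist y y' ≤ dist (lastTimeAbove g a b y) (lastTimeAbove g a b y') := by
    have hT := lastTimeAbove_antitone (g := g) hab hy'.2 hyy'
    have hmono := hg (lastTimeAbove_mem_Icc hab hy'.2) (lastTimeAbove_mem_Icc hab hy.2) hT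
    simp only [apply_lastTimeAbove hg hab hy.2 hy.1, apply_lastTimeAbove hg hab hy'.2 hy'.1]
      at hmono
    rw [dist_comm, Real.dist_eq, Real.dist_eq, abs_of_nonneg (by linarith),
      abs_of_nonneg (by linarith)]
    linarith
  refine LipschitzOnWith.of_dist_le_mul ?_
  rintro _ ⟨y, hy, rfl⟩ _ ⟨y', hy', rfl⟩
  rw [apply_lastTimeAbove hg hab hy.2 hy.1, apply_lastTimeAbove hg hab hy'.2 hy'.1,
    NNReal.coe_one, one_mul]
  rcases le_total y y' with hyy' | hy'y
  · exact expanding hy hy' hyy'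
  · rw [dist_comm, dist_comm (lastTimeAbove g a b y)]
    exact expanding hy' hy hy'y

theorem ofReal_sub_le_volume_setOf_mem_Icc (hg : MonotoneOn (fun t => g t + t) (Icc a b))
    (hab : a ≤ b) {c₁ c₂ : ℝ} (hc₁ : c₁ ≤ g a) (hc₂ : g b ≤ c₂) :
    ENNReal.ofReal (c₁ - c₂) ≤ volume {t ∈ Icc a b | g t ∈ Icc c₂ c₁} := by
  set T := lastTimeAbove g a b
  have hlevels : Ioc c₂ c₁ ⊆ Ioc (g b) (g a) := Ioc_subset_Ioc hc₂ hc₁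
  have g_T {y : ℝ} (hy : y ∈ Ioc c₂ c₁) : g (T y) = y :=
    apply_lastTimeAbove hg hab (hlevels hy).2 (hlevels hy).1
  calc ENNReal.ofReal (c₁ - c₂) = volume (Ioc c₂ c₁) := Real.volume_Ioc.symm
    _ ≤ volume (g '' (T '' Ioc c₂ c₁)) :=
      measure_mono fun y hy => ⟨T y, mem_image_of_mem T hy, g_T hy⟩
    _ ≤ volume (T '' Ioc c₂ c₁) := by
      simpa using ((lipschitzOnWith_one_image_lastTimeAbove hg hab).mono
        (image_mono hlevels)).volume_image_le
    _ ≤ volume {t ∈ Icc a b | g t ∈ Icc c₂ c₁} := by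
      refine measure_mono ?_
      rintro _ ⟨y, hy, rfl⟩
      exact ⟨lastTimeAbove_mem_Icc hab (hlevels hy).2, by
        rw [g_T hy]; exact Ioc_subset_Icc_self hy⟩

end LastTimeAbove

theorem mul_exp_le_iff_le_log_sub {c x t : ℝ} (hc : 0 < c) (hx : 0 < x) :
    c * exp t ≤ x ↔ log c ≤ log x - t := by
  rw [le_sub_iff_add_le, le_log_iff_exp_le hx, exp_add, exp_log hc]

theorem le_mul_exp_iff_log_sub_le {c x t : ℝ} (hc : 0 < c) (hx : 0 < x) :
    x ≤ c * exp t ↔ log x - t ≤ log c := by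
  rw [sub_le_iff_le_add, log_le_iff_le_exp hx, exp_add, exp_log hc]

/-- An isoperimetric-type lemma for non-decreasing functions crossing two
exponential curves. -/
theorem isoperimetric_lemma
    (t₁ t₂ C₁ C₂ : ℝ) (k : ℝ → ℝ)
    (ht : t₁ < t₂) (hC₂ : 0 < C₂) (hC : C₂ < C₁)
    (hk : MonotoneOn k (Set.Icc t₁ t₂))
    (h₁ : C₁ * Real.exp t₁ ≤ k t₁) (h₂ : k t₂ ≤ C₂ * Real.exp t₂) :
    ENNReal.ofReal (Real.log (C₁ / C₂)) ≤
      volume {t ∈ Set.Icc t₁ t₂ | C₂ * Real.exp t ≤ k t ∧ k t ≤ C₁ * Real.exp t} := by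
  have hC₁ : 0 < C₁ := hC₂.trans hC
  have hk_pos {t : ℝ} (htI : t ∈ Icc t₁ t₂) : 0 < k t :=
    (by positivity : 0 < C₁ * exp t₁).trans_le (h₁.trans (hk (left_mem_Icc.2 ht.le) htI htI.1))
  have hlog_k : MonotoneOn (fun t => (log (k t) - t) + t) (Icc t₁ t₂) := fun s hs t htI hst => by
    simpa using log_le_log (hk_pos hs) (hk hs htI hst)
  have hstart : log C₁ ≤ log (k t₁) - t₁ :=
    (mul_exp_le_iff_le_log_sub hC₁ (hk_pos (left_mem_Icc.2 ht.le))).1 h₁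
  have hend : log (k t₂) - t₂ ≤ log C₂ :=
    (le_mul_exp_iff_log_sub_le hC₂ (hk_pos (right_mem_Icc.2 ht.le))).1 h₂
  rw [log_div hC₁.ne' hC₂.ne']
  refine (ofReal_sub_le_volume_setOf_mem_Icc hlog_k ht.le hstart hend).trans (measure_mono ?_)
  rintro t ⟨htI, hlow, hup⟩
  exact ⟨htI, (mul_exp_le_iff_le_log_sub hC₂ (hk_pos htI)).2 hlow,
    (le_mul_exp_iff_log_sub_le hC₁ (hk_pos htI)).2 hup⟩
end

section
/- Let s : [0,∞) → ℝ and M ≥ 0 satisfy e^{t'}·s(t') − e^{t}·s(t) ≥ −M·(e^{t'} − e^{t}) for all t' ≥ t ≥ 0. Suppose 0 ≤ t₁ ≤ t₂ and s(t₁) ≥ S₁ ≥ S₂ ≥ s(t₂) with S₂ + M > 0. Then the set { t ∈ [t₁,t₂] : S₂ ≤ s(t) ≤ S₁ } has Lebesgue measure at least log((S₁+M)/(S₂+M)). -/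
/-!
The function `t ↦ exp t * (s t + M)` is nondecreasing. Let `c` be the last time in `[t₁, t₂]`
at which `s ≥ S₁`. After `c` that function stays above `exp c * (S₁ + M)`, so `s ≥ S₂` on
`(c, c + log ((S₁ + M) / (S₂ + M))]`. Since `s t₂ ≤ S₂`, this interval ends by `t₂`, and on it
`s < S₁` by the choice of `c`.
-/

open Real MeasureTheory Set

section
variable {g : ℝ → ℝ} {a b A : ℝ}

/-- `sSup E` lies in the closure of `E`, and the bound `exp u * A ≤ exp t * g t` is a closed
condition on `u`, so it passes from the points of `E` to their supremum. -/
lemma exp_csSup_mul_le_exp_mul {E : Set ℝ} (hg : MonotoneOn (fun t => exp t * g t) (Icc a b))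
    (hE : E.Nonempty) (hEab : E ⊆ Icc a b) (hEA : ∀ u ∈ E, A ≤ g u)
    {t : ℝ} (ht : t ∈ Icc (sSup E) b) :
    exp (sSup E) * A ≤ exp t * g t := by
  have hbdd : BddAbove E := ⟨b, fun u hu => (hEab hu).2⟩
  have hclosed : IsClosed {u | exp u * A ≤ exp t * g t} :=
    isClosed_le (by fun_prop) continuous_const
  refine hclosed.closure_subset_iff.mpr (fun u hu => ?_) (csSup_mem_closure hE hbdd)
  have htu : u ≤ t := (le_csSup hbdd hu).trans ht.1
  have htab : t ∈ Icc a b := ⟨(hEab hu).1.trans htu, ht.2⟩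
  calc exp u * A ≤ exp u * g u := mul_le_mul_of_nonneg_left (hEA u hu) (exp_pos u).le
    _ ≤ exp t * g t := hg (hEab hu) htab htu

theorem ofReal_log_div_le_volume_of_monotoneOn_exp_mul {B : ℝ}
    (hg : MonotoneOn (fun t => exp t * g t) (Icc a b)) (hab : a ≤ b)
    (hA : A ≤ g a) (hBA : B ≤ A) (hB : g b ≤ B) (hB₀ : 0 < B) :
    ENNReal.ofReal (log (A / B)) ≤ volume {t ∈ Icc a b | B ≤ g t ∧ g t ≤ A} := by
  set E := {u ∈ Icc a b | A ≤ g u}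
  have haE : a ∈ E := ⟨⟨le_rfl, hab⟩, hA⟩
  have hbdd : BddAbove E := ⟨b, fun u hu => hu.1.2⟩
  set c := sSup E
  set L := log (A / B)
  have hac : a ≤ c := le_csSup hbdd haE
  have hcb : c ≤ b := csSup_le ⟨a, haE⟩ fun u hu => hu.1.2
  have hcL : exp (c + L) * B = exp c * A := by
    rw [exp_add, exp_log (div_pos (hB₀.trans_le hBA) hB₀)]
    field_simp
  have hlower : ∀ t ∈ Icc c b, exp (c + L) * B ≤ exp t * g t := fun t ht =>
    hcL ▸ exp_csSup_mul_le_exp_mul hg ⟨a, haE⟩ (fun u hu => hu.1) (fun u hu => hu.2) ht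
  have hcLb : c + L ≤ b := by
    have : exp (c + L) * B ≤ exp b * B :=
      (hlower b ⟨hcb, le_rfl⟩).trans (mul_le_mul_of_nonneg_left hB (exp_pos b).le)
    exact exp_le_exp.mp (le_of_mul_le_mul_right this hB₀)
  have hsub : Ioc c (c + L) ⊆ {t ∈ Icc a b | B ≤ g t ∧ g t ≤ A} := by
    intro t ⟨hct, htcL⟩
    have htab : t ∈ Icc a b := ⟨hac.trans hct.le, htcL.trans hcLb⟩
    refine ⟨htab, ?_, ?_⟩
    · have : exp t * B ≤ exp t * g t :=
        (mul_le_mul_of_nonneg_right (exp_le_exp.mpr htcL) hB₀.le).trans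
          (hlower t ⟨hct.le, htab.2⟩)
      exact le_of_mul_le_mul_left this (exp_pos t)
    · by_contra! hgt
      exact hct.not_ge (le_csSup hbdd ⟨htab, hgt.le⟩)
  calc ENNReal.ofReal L = volume (Ioc c (c + L)) := by rw [Real.volume_Ioc, add_sub_cancel_left]
    _ ≤ _ := measure_mono hsub

end

theorem measure_of_intermediate_values_general
    (s : ℝ → ℝ) (M : ℝ)
    (h1 : ∀ t t' : ℝ, 0 ≤ t → t ≤ t' →
      -M * (Real.exp t' - Real.exp t) ≤ Real.exp t' * s t' - Real.exp t * s t)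
    (t₁ t₂ S₁ S₂ : ℝ) (ht₁ : 0 ≤ t₁) (ht : t₁ ≤ t₂)
    (hs₁ : S₁ ≤ s t₁) (hS : S₂ ≤ S₁) (hs₂ : s t₂ ≤ S₂) (hS₂M : 0 < S₂ + M) :
    ENNReal.ofReal (Real.log ((S₁ + M) / (S₂ + M))) ≤
      volume {t ∈ Set.Icc t₁ t₂ | S₂ ≤ s t ∧ s t ≤ S₁} := by
  have hmono : MonotoneOn (fun t => exp t * (s t + M)) (Icc t₁ t₂) :=
    fun t ht' t' _ htt' => by linear_combination h1 t t' (ht₁.trans ht'.1) htt'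
  have hset : {t ∈ Icc t₁ t₂ | S₂ + M ≤ s t + M ∧ s t + M ≤ S₁ + M}
      = {t ∈ Icc t₁ t₂ | S₂ ≤ s t ∧ s t ≤ S₁} := by
    simp only [add_le_add_iff_right]
  rw [← hset]
  exact ofReal_log_div_le_volume_of_monotoneOn_exp_mul hmono ht (by linarith) (by linarith)
    (by linarith) hS₂M

theorem measure_of_intermediate_values
    (s : ℝ → ℝ) (M : ℝ) (hM : 0 ≤ M)
    (h1 : ∀ t t' : ℝ, 0 ≤ t → t ≤ t' →
      -M * (Real.exp t' - Real.exp t) ≤ Real.exp t' * s t' - Real.exp t * s t)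
    (t₁ t₂ S₁ S₂ : ℝ) (ht₁ : 0 ≤ t₁) (ht : t₁ ≤ t₂)
    (hs₁ : S₁ ≤ s t₁) (hS : S₂ ≤ S₁) (hs₂ : s t₂ ≤ S₂) (hS₂M : 0 < S₂ + M) :
    ENNReal.ofReal (Real.log ((S₁ + M) / (S₂ + M))) ≤
      volume {t ∈ Set.Icc t₁ t₂ | S₂ ≤ s t ∧ s t ≤ S₁} :=
  measure_of_intermediate_values_general s M h1 t₁ t₂ S₁ S₂ ht₁ ht hs₁ hS hs₂ hS₂M
end

section
/- Let s : [0,∞) → ℝ be integrable over bounded intervals and M' ≥ 0 with |∫_0^x s(t) dt| ≤ M' for all x ≥ 0. Let e > 0 and 0 < S₂ < S₁, and suppose h ≥ 2·(e + M'/S₁ + M'/S₂). Then for every x ≥ 0, at least one of the following holds: (i) the set E_{x,h,S₁} = { t ∈ [x, x+h] : |s(t)| ≤ S₁ } has Lebesgue measure at least e; or (ii) there exist t₁, t₂ with x ≤ t₁ < t₂ ≤ x+h, s(t₁) ≥ S₁ and s(t₂) ≤ S₂. -/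
open Real MeasureTheory

/-!
If both alternatives fail, let `τ` be the first time in `[x, x + h]` at which `s ≥ S₁` (or `x + h`
if there is none). Every integral of `s` over an interval in `[0, ∞)` is at most `2M'` in absolute
value. Before `τ` we have `s < S₁`, and `|s| ≤ S₁` only on a set of measure `< e`, so `s < -S₁` on
the rest; hence `τ - x < 2e + 2M'/S₁`. After `τ` there is no crossing, so `s > S₂` there and
`x + h - τ ≤ 2M'/S₂`. Adding the two bounds contradicts `h ≥ 2(e + M'/S₁ + M'/S₂)`.
-/

theorem exists_hitting_time_Icc {a b : ℝ} (hab : a ≤ b) (P : ℝ → Prop) :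
    ∃ τ ∈ Set.Icc a b, (∀ t ∈ Set.Ico a τ, ¬ P t) ∧ ∀ t ∈ Set.Ioc τ b, ∃ u ∈ Set.Ico a t, P u := by
  set T : Set ℝ := insert b {t ∈ Set.Icc a b | P t}
  have hT : T.Nonempty := ⟨b, Set.mem_insert _ _⟩
  have hT_lb : a ∈ lowerBounds T := by
    rintro t (rfl | ht)
    exacts [hab, ht.1.1]
  have hτb : sInf T ≤ b := csInf_le ⟨a, hT_lb⟩ (Set.mem_insert _ _)
  refine ⟨sInf T, ⟨le_csInf hT hT_lb, hτb⟩, fun t ht hPt => ?_, fun t ht => ?_⟩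
  · exact ht.2.not_ge
      (csInf_le ⟨a, hT_lb⟩ (Set.mem_insert_of_mem _ ⟨⟨ht.1, ht.2.le.trans hτb⟩, hPt⟩))
  · obtain ⟨u, hu, hut⟩ := exists_lt_of_csInf_lt hT ht.1
    rcases hu with rfl | hu
    · exact absurd ht.2 hut.not_ge
    · exact ⟨u, ⟨hu.1.1, hut⟩, hu.2⟩

theorem abs_intervalIntegral_le_two_mul_s18 {f : ℝ → ℝ} {μ : Measure ℝ} {a b c M : ℝ}
    (hca : IntervalIntegrable f μ c a) (hcb : IntervalIntegrable f μ c b)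
    (ha : |∫ t in c..a, f t ∂μ| ≤ M) (hb : |∫ t in c..b, f t ∂μ| ≤ M) :
    |∫ t in a..b, f t ∂μ| ≤ 2 * M := by
  rw [← intervalIntegral.integral_interval_sub_left hcb hca, two_mul]
  exact (abs_sub _ _).trans (add_le_add hb ha)

/-- On `A` the pointwise bound `f ≤ 2S·𝟙{-S ≤ f} - S` charges the values `|f| ≤ S`
with `+S` and all others with `-S`. -/
theorem mul_measureReal_le_sub_setIntegral {α : Type*} [MeasurableSpace α] {μ : Measure α}
    {f : α → ℝ} {A : Set α} {S : ℝ} (hf : Measurable f) (hA : MeasurableSet A) (hμA : μ A ≠ ⊤)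
    (hfA : IntegrableOn f A μ) (hle : ∀ t ∈ A, f t ≤ S) :
    S * μ.real A ≤ 2 * S * μ.real {t ∈ A | |f t| ≤ S} - ∫ t in A, f t ∂μ := by
  set B := {t | -S ≤ f t}
  have hB : MeasurableSet B := measurableSet_le measurable_const hf
  have hAB : {t ∈ A | |f t| ≤ S} = A ∩ B := by
    ext t
    simp only [Set.mem_ofPred_eq, Set.mem_inter_iff, abs_le, B]
    exact ⟨fun h => ⟨h.1, h.2.1⟩, fun h => ⟨h.1, h.2, hle t h.1⟩⟩
  have hconst : IntegrableOn (fun _ => (2 * S : ℝ)) A μ := integrableOn_const hμA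
  have hpoint : ∀ t ∈ A, f t ≤ B.indicator (fun _ => 2 * S) t - S := by
    intro t ht
    by_cases htB : t ∈ B
    · rw [Set.indicator_of_mem htB]; linarith [hle t ht]
    · rw [Set.indicator_of_notMem htB]; simp only [B, Set.mem_ofPred_eq, not_le] at htB; linarith
  have hmono : ∫ t in A, f t ∂μ ≤ ∫ t in A, (B.indicator (fun _ => 2 * S) t - S) ∂μ :=
    setIntegral_mono_on hfA ((hconst.indicator hB).sub (integrableOn_const hμA)) hA hpoint
  rw [integral_sub (hconst.indicator hB) (integrableOn_const hμA), setIntegral_indicator hB,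
    setIntegral_const, setIntegral_const, ← hAB, smul_eq_mul, smul_eq_mul] at hmono
  linarith

theorem sub_le_div_of_forall_le_of_intervalIntegral_le {f : ℝ → ℝ} {a b S M : ℝ} (hS : 0 < S)
    (hab : a ≤ b) (hf : IntegrableOn f (Set.Ioc a b)) (hge : ∀ t ∈ Set.Ioc a b, S ≤ f t)
    (hI : ∫ t in a..b, f t ≤ M) : b - a ≤ M / S := by
  have key := setIntegral_ge_of_const_le_real measurableSet_Ioc (by simp) hge hf
  rw [volume_real_Ioc_of_le hab, ← intervalIntegral.integral_of_le hab] at key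
  rw [le_div_iff₀ hS]
  linarith

theorem sub_lt_of_forall_lt_of_le_intervalIntegral {f : ℝ → ℝ} {a b S e M : ℝ} (hS : 0 < S)
    (hab : a ≤ b) (hf : Measurable f) (hfi : IntegrableOn f (Set.Ioo a b))
    (hlt : ∀ t ∈ Set.Ioo a b, f t < S) (hsmall : volume.real {t ∈ Set.Ioo a b | |f t| ≤ S} < e)
    (hI : -M ≤ ∫ t in a..b, f t) : b - a < 2 * e + M / S := by
  have key := mul_measureReal_le_sub_setIntegral hf measurableSet_Ioo (by simp) hfi
    (fun t ht => (hlt t ht).le)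
  rw [volume_real_Ioo_of_le hab, ← integral_Ioc_eq_integral_Ioo,
    ← intervalIntegral.integral_of_le hab] at key
  rw [← sub_lt_iff_lt_add', lt_div_iff₀ hS]
  nlinarith

theorem small_values_or_crossing
    (s : ℝ → ℝ) (M' : ℝ) (hM' : 0 ≤ M')
    (hmeas : Measurable s)
    (hint : ∀ a b : ℝ, IntegrableOn s (Set.Icc a b))
    (h2 : ∀ x : ℝ, 0 ≤ x → |∫ t in (0:ℝ)..x, s t| ≤ M')
    (e S₁ S₂ h : ℝ) (he : 0 < e) (hS₂ : 0 < S₂) (hS : S₂ < S₁)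
    (hh : 2 * (e + M' / S₁ + M' / S₂) ≤ h) :
    ∀ x : ℝ, 0 ≤ x →
      ENNReal.ofReal e ≤ volume {t ∈ Set.Icc x (x + h) | |s t| ≤ S₁} ∨
      ∃ t₁ t₂ : ℝ, x ≤ t₁ ∧ t₁ < t₂ ∧ t₂ ≤ x + h ∧ S₁ ≤ s t₁ ∧ s t₂ ≤ S₂ := by
  intro x hx
  by_contra! hcon
  obtain ⟨hE, hcross⟩ := hcon
  have hS₁ : 0 < S₁ := hS₂.trans hS
  have hosc : ∀ a b, 0 ≤ a → 0 ≤ b → |∫ t in a..b, s t| ≤ 2 * M' := fun a b ha hb =>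
    abs_intervalIntegral_le_two_mul_s18 (hint _ _).intervalIntegrable (hint _ _).intervalIntegrable
      (h2 a ha) (h2 b hb)
  obtain ⟨τ, ⟨hxτ, hτh⟩, hbelow, habove⟩ :=
    exists_hitting_time_Icc (le_add_of_nonneg_right (le_trans (by positivity) hh) : x ≤ x + h)
      (fun t => S₁ ≤ s t)
  have hsmall : volume.real {t ∈ Set.Ioo x τ | |s t| ≤ S₁} < e :=
    (measureReal_mono (s₂ := {t ∈ Set.Icc x (x + h) | |s t| ≤ S₁})
      (fun t ht => ⟨⟨ht.1.1.le, ht.1.2.le.trans hτh⟩, ht.2⟩) hE.ne_top).trans_lt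
      (ENNReal.toReal_lt_of_lt_ofReal hE)
  have hfirst : τ - x < 2 * e + 2 * M' / S₁ :=
    sub_lt_of_forall_lt_of_le_intervalIntegral hS₁ hxτ hmeas
      ((hint x τ).mono_set Set.Ioo_subset_Icc_self)
      (fun t ht => not_le.1 (hbelow t ⟨ht.1.le, ht.2⟩)) hsmall
      (abs_le.1 (hosc x τ hx (hx.trans hxτ))).1
  have hsecond : x + h - τ ≤ 2 * M' / S₂ :=
    sub_le_div_of_forall_le_of_intervalIntegral_le hS₂ hτh
      ((hint τ (x + h)).mono_set Set.Ioc_subset_Icc_self)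
      (fun t ht => by
        obtain ⟨u, ⟨hxu, hut⟩, hu⟩ := habove t ht
        exact (hcross u t hxu hut ht.2 hu).le)
      (abs_le.1 (hosc τ (x + h) (hx.trans hxτ) (hx.trans (hxτ.trans hτh)))).2
  rw [mul_div_assoc] at hfirst hsecond
  linarith
end
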